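/- arXiv:1205.5544 — 5 statements merged into one kernel-verified Lean document; each statement's English description precedes it below -/
import Mathlib

section
/- For every η > 0 there exists ε₀ ∈ (0,1] such that for all 0 < ε ≤ ε₀, every pair of auxiliary functions ρ, σ satisfying the conditions in the context, and every ε′ with (2/3)ε ≤ ε′ ≤ ε, the Lagrangian handle model W_ε and the cylindrical model W_0 coincide outside the neighbourhood U_{ε′}; that is, W_ε \ U_{ε′} = W_0 \ U_{ε′} as subsets of ℝ^{n+1} × ℝ^{n+1}. -/
open Finset

namespace LegendrianSurgery

/-- `|x′|² = x_1² + ⋯ + x_{k+1}²` (0-indexed: coordinates `0,…,k`). -/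
noncomputable def sq1 (n k : ℕ) (x : Fin (n + 1) → ℝ) : ℝ :=
  ∑ i ∈ Finset.univ.filter (fun i : Fin (n + 1) => (i : ℕ) < k + 1), x i ^ 2

/-- `|x″|² = x_{k+2}² + ⋯ + x_n²` (0-indexed: coordinates `k+1,…,n-1`). -/
noncomputable def sq2 (n k : ℕ) (x : Fin (n + 1) → ℝ) : ℝ :=
  ∑ i ∈ Finset.univ.filter (fun i : Fin (n + 1) => k + 1 ≤ (i : ℕ) ∧ (i : ℕ) < n), x i ^ 2

/-- `u_ε(x) = |x′|² − |x″|² + ρ(|x′|²)·σ(x_{n+1}) − η`. -/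
noncomputable def uEps (n k : ℕ) (η : ℝ) (ρ σ : ℝ → ℝ) (x : Fin (n + 1) → ℝ) : ℝ :=
  sq1 n k x - sq2 n k x + ρ (sq1 n k x) * σ (x (Fin.last n)) - η

/-- `F_ε(x) = max(u_ε(x),0)^{3/2}`. -/
noncomputable def FEps (n k : ℕ) (η : ℝ) (ρ σ : ℝ → ℝ) (x : Fin (n + 1) → ℝ) : ℝ :=
  max (uEps n k η ρ σ x) 0 ^ ((3 : ℝ) / 2)

/-- `u_0(x) = |x′|² − |x″|² − η`. -/
noncomputable def u0 (n k : ℕ) (η : ℝ) (x : Fin (n + 1) → ℝ) : ℝ :=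
  sq1 n k x - sq2 n k x - η

/-- `F_0(x) = max(u_0(x),0)^{3/2}`. -/
noncomputable def F0 (n k : ℕ) (η : ℝ) (x : Fin (n + 1) → ℝ) : ℝ :=
  max (u0 n k η x) 0 ^ ((3 : ℝ) / 2)

/-- The gradient of a function on `ℝ^{n+1}`, given by its partial derivatives. -/
noncomputable def grad (n : ℕ) (f : (Fin (n + 1) → ℝ) → ℝ) (x : Fin (n + 1) → ℝ) :
    Fin (n + 1) → ℝ :=
  fun i => fderiv ℝ f x (Pi.single i 1)

/-- The Lagrangian model `W = {(x,y) : u(x) ≥ 0, x_{n+1} > 0, y = ±∇(F(x)·x_{n+1})}`. -/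
noncomputable def W (n : ℕ) (F u : (Fin (n + 1) → ℝ) → ℝ) :
    Set ((Fin (n + 1) → ℝ) × (Fin (n + 1) → ℝ)) :=
  {p | 0 ≤ u p.1 ∧ 0 < p.1 (Fin.last n) ∧
    (p.2 = grad n (fun x => F x * x (Fin.last n)) p.1 ∨
     p.2 = -grad n (fun x => F x * x (Fin.last n)) p.1)}

/-- The neighbourhood `U_{ε′}`. -/
noncomputable def U (n k : ℕ) (η ε' : ℝ) : Set ((Fin (n + 1) → ℝ) × (Fin (n + 1) → ℝ)) :=
  {p | sq1 n k p.1 < η + ε' ∧ sq2 n k p.1 < 2 * ε' ∧ 0 < p.1 (Fin.last n) ∧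
    (∀ i : Fin (n + 1), (i : ℕ) < n →
      |p.2 i| < 3 * Real.sqrt (ε' * (η + ε')) * p.1 (Fin.last n)) ∧
    |p.2 (Fin.last n)| < 3 * ε' ^ ((1 : ℝ) / 6) * (η + ε')}

open Filter Topology in
private lemma hasDerivAt_hfun (t : ℝ) :
    HasDerivAt (fun s : ℝ => max s 0 ^ ((3 : ℝ) / 2)) (3 / 2 * max t 0 ^ ((1 : ℝ) / 2)) t := by
  rcases lt_trichotomy t 0 with ht | rfl | ht
  · have hev : (fun s : ℝ => max s 0 ^ ((3 : ℝ) / 2)) =ᶠ[𝓝 t] fun _ => (0:ℝ) ^ ((3:ℝ)/2) := by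
      filter_upwards [Iio_mem_nhds ht] with s hs
      rw [max_eq_right (le_of_lt hs)]
    rw [max_eq_right ht.le, Real.zero_rpow (by norm_num), mul_zero]
    exact (hasDerivAt_const t _).congr_of_eventuallyEq hev
  · rw [max_self, Real.zero_rpow (by norm_num), mul_zero]
    rw [hasDerivAt_iff_isLittleO]
    simp only [sub_zero, smul_zero, max_self, Real.zero_rpow (show ((3:ℝ)/2) ≠ 0 by norm_num)]
    rw [Asymptotics.isLittleO_iff]
    intro c hc
    filter_upwards [Metric.ball_mem_nhds (0:ℝ) (show (0:ℝ) < c ^ 2 by positivity)] with s hs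
    rw [Metric.mem_ball, Real.dist_eq, sub_zero] at hs
    rw [Real.norm_eq_abs, Real.norm_eq_abs]
    rcases le_or_gt s 0 with hs0 | hs0
    · rw [max_eq_right hs0, Real.zero_rpow (by norm_num), abs_zero]
      positivity
    · rw [max_eq_left hs0.le, abs_of_nonneg (Real.rpow_nonneg hs0.le _)]
      have h1 : s ^ ((3:ℝ)/2) = s ^ ((1:ℝ)/2) * s := by
        rw [show ((3:ℝ)/2) = 1/2 + 1 by norm_num, Real.rpow_add hs0, Real.rpow_one]
      rw [h1]
      have h2 : s ^ ((1:ℝ)/2) ≤ c := by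
        have h3 : s ≤ c ^ 2 := le_of_lt (lt_of_abs_lt hs)
        have h4 := Real.rpow_le_rpow hs0.le h3 (show (0:ℝ) ≤ 1/2 by norm_num)
        have h5 : (c ^ 2 : ℝ) ^ ((1:ℝ)/2) = c := by
          rw [← Real.rpow_natCast c 2, ← Real.rpow_mul hc.le]
          norm_num
        rwa [h5] at h4
      calc s ^ ((1:ℝ)/2) * s ≤ c * s := mul_le_mul_of_nonneg_right h2 hs0.le
        _ = c * |s| := by rw [abs_of_pos hs0]
  · have hev : (fun s : ℝ => max s 0 ^ ((3 : ℝ) / 2)) =ᶠ[𝓝 t] fun s => s ^ ((3:ℝ)/2) := by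
      filter_upwards [Ioi_mem_nhds ht] with s hs
      rw [max_eq_left (le_of_lt hs)]
    have h := Real.hasDerivAt_rpow_const (x := t) (p := (3:ℝ)/2) (Or.inl (ne_of_gt ht))
    rw [max_eq_left ht.le]
    have h2 : HasDerivAt (fun s : ℝ => max s 0 ^ ((3:ℝ)/2)) ((3:ℝ)/2 * t ^ ((3:ℝ)/2 - 1)) t :=
      h.congr_of_eventuallyEq hev
    convert h2 using 2
    norm_num

private noncomputable def pr (n : ℕ) (i : Fin (n + 1)) : (Fin (n + 1) → ℝ) →L[ℝ] ℝ :=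
  ContinuousLinearMap.proj i

private lemma pr_apply (n : ℕ) (i : Fin (n + 1)) (w : Fin (n + 1) → ℝ) : pr n i w = w i := rfl

private lemma hasFDerivAt_proj (n : ℕ) (i : Fin (n + 1)) (x : Fin (n + 1) → ℝ) :
    HasFDerivAt (fun w : Fin (n + 1) → ℝ => w i) (pr n i) x :=
  (pr n i).hasFDerivAt

private lemma hasFDerivAt_sumsq (n : ℕ) (S : Finset (Fin (n + 1))) (x : Fin (n + 1) → ℝ) :
    HasFDerivAt (fun w : Fin (n + 1) → ℝ => ∑ i ∈ S, w i ^ 2)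
      (∑ i ∈ S, (2 * x i) • pr n i) x := by
  apply HasFDerivAt.fun_sum
  intro i _
  have h := (hasFDerivAt_proj n i x).mul (hasFDerivAt_proj n i x)
  have h2 : (2 * x i) • pr n i = x i • pr n i + x i • pr n i := by
    rw [← add_smul]; congr 1; ring
  rw [h2]
  exact h.congr_of_eventuallyEq (Filter.Eventually.of_forall fun w => pow_two (w i))

private lemma sumD_apply (n : ℕ) (S : Finset (Fin (n + 1))) (a : Fin (n + 1) → ℝ)
    (i : Fin (n + 1)) :
    (∑ j ∈ S, (a j) • pr n j) (Pi.single i 1) = if i ∈ S then a i else 0 := by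
  rw [ContinuousLinearMap.sum_apply]
  simp only [ContinuousLinearMap.coe_smul', Pi.smul_apply, pr_apply, Pi.single_apply,
    smul_eq_mul, mul_ite, mul_one, mul_zero]
  exact Finset.sum_ite_eq' S i a
private lemma key_hasFDerivAt (n k : ℕ) (η : ℝ) (ρ σ : ℝ → ℝ) (hρ : Differentiable ℝ ρ)
    (hσ : Differentiable ℝ σ) (x : Fin (n + 1) → ℝ) :
    HasFDerivAt (fun w => FEps n k η ρ σ w * w (Fin.last n))
      (FEps n k η ρ σ x • pr n (Fin.last n) +
        x (Fin.last n) • ((3 / 2 * max (uEps n k η ρ σ x) 0 ^ ((1 : ℝ) / 2)) •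
          (((∑ j ∈ Finset.univ.filter (fun j : Fin (n + 1) => (j : ℕ) < k + 1),
                (2 * x j) • pr n j)
            - ∑ j ∈ Finset.univ.filter (fun j : Fin (n + 1) => k + 1 ≤ (j : ℕ) ∧ (j : ℕ) < n),
                (2 * x j) • pr n j)
           + (ρ (sq1 n k x) • (deriv σ (x (Fin.last n)) • pr n (Fin.last n))
              + σ (x (Fin.last n)) • (deriv ρ (sq1 n k x) •
                  ∑ j ∈ Finset.univ.filter (fun j : Fin (n + 1) => (j : ℕ) < k + 1),
                    (2 * x j) • pr n j))))) x := by
  have hDs := hasFDerivAt_sumsq n (Finset.univ.filter fun j : Fin (n + 1) => (j : ℕ) < k + 1) x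
  have hDt := hasFDerivAt_sumsq n
    (Finset.univ.filter fun j : Fin (n + 1) => k + 1 ≤ (j : ℕ) ∧ (j : ℕ) < n) x
  have hs1 : HasFDerivAt (sq1 n k) _ x := hDs
  have hs2 : HasFDerivAt (sq2 n k) _ x := hDt
  have hz := hasFDerivAt_proj n (Fin.last n) x
  have hρs : HasFDerivAt (fun w => ρ (sq1 n k w)) (deriv ρ (sq1 n k x) • _) x :=
    (hρ (sq1 n k x)).hasDerivAt.comp_hasFDerivAt x hs1
  have hσz : HasFDerivAt (fun w : Fin (n + 1) → ℝ => σ (w (Fin.last n)))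
      (deriv σ (x (Fin.last n)) • pr n (Fin.last n)) x :=
    (hσ (x (Fin.last n))).hasDerivAt.comp_hasFDerivAt x hz
  have hu : HasFDerivAt (uEps n k η ρ σ) _ x :=
    ((hs1.sub hs2).add (hρs.mul hσz)).sub_const η
  have hF : HasFDerivAt (FEps n k η ρ σ) _ x :=
    (hasDerivAt_hfun (uEps n k η ρ σ x)).comp_hasFDerivAt x hu
  exact hF.mul hz

private lemma grad_first (n k : ℕ) (hk : k + 1 ≤ n) (η : ℝ) (ρ σ : ℝ → ℝ)
    (hρ : Differentiable ℝ ρ) (hσ : Differentiable ℝ σ) (x : Fin (n + 1) → ℝ)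
    (i : Fin (n + 1)) (hik : (i : ℕ) < k + 1) :
    grad n (fun w => FEps n k η ρ σ w * w (Fin.last n)) x i
      = x (Fin.last n) * (3 / 2 * max (uEps n k η ρ σ x) 0 ^ ((1 : ℝ) / 2))
          * (2 * x i * (1 + deriv ρ (sq1 n k x) * σ (x (Fin.last n)))) := by
  have hlast : Fin.last n ≠ i := by
    intro hcon
    have := congrArg Fin.val hcon
    simp only [Fin.val_last] at this
    omega
  have hiA : i ∈ Finset.univ.filter (fun j : Fin (n + 1) => (j : ℕ) < k + 1) := by
    simp [hik]; omega
  have hiB : i ∉ Finset.univ.filter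
      (fun j : Fin (n + 1) => k + 1 ≤ (j : ℕ) ∧ (j : ℕ) < n) := by
    simp; omega
  simp only [grad]
  rw [(key_hasFDerivAt n k η ρ σ hρ hσ x).fderiv]
  simp only [ContinuousLinearMap.add_apply, ContinuousLinearMap.coe_smul', Pi.smul_apply,
    ContinuousLinearMap.sub_apply, sumD_apply, pr_apply, smul_eq_mul,
    Pi.single_eq_of_ne hlast, if_pos hiA, if_neg hiB]
  ring

private lemma grad_second (n k : ℕ) (hk : k + 1 ≤ n) (η : ℝ) (ρ σ : ℝ → ℝ)
    (hρ : Differentiable ℝ ρ) (hσ : Differentiable ℝ σ) (x : Fin (n + 1) → ℝ)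
    (i : Fin (n + 1)) (hik : k + 1 ≤ (i : ℕ)) (hin : (i : ℕ) < n) :
    grad n (fun w => FEps n k η ρ σ w * w (Fin.last n)) x i
      = x (Fin.last n) * (3 / 2 * max (uEps n k η ρ σ x) 0 ^ ((1 : ℝ) / 2))
          * (-(2 * x i)) := by
  have hlast : Fin.last n ≠ i := by
    intro hcon
    have := congrArg Fin.val hcon
    simp only [Fin.val_last] at this
    omega
  have hiA : i ∉ Finset.univ.filter (fun j : Fin (n + 1) => (j : ℕ) < k + 1) := by
    simp; omega
  have hiB : i ∈ Finset.univ.filter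
      (fun j : Fin (n + 1) => k + 1 ≤ (j : ℕ) ∧ (j : ℕ) < n) := by
    simp [hik, hin]; omega
  simp only [grad]
  rw [(key_hasFDerivAt n k η ρ σ hρ hσ x).fderiv]
  simp only [ContinuousLinearMap.add_apply, ContinuousLinearMap.coe_smul', Pi.smul_apply,
    ContinuousLinearMap.sub_apply, sumD_apply, pr_apply, smul_eq_mul,
    Pi.single_eq_of_ne hlast, if_pos hiB, if_neg hiA]
  ring

private lemma grad_last (n k : ℕ) (hk : k + 1 ≤ n) (η : ℝ) (ρ σ : ℝ → ℝ)
    (hρ : Differentiable ℝ ρ) (hσ : Differentiable ℝ σ) (x : Fin (n + 1) → ℝ) :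
    grad n (fun w => FEps n k η ρ σ w * w (Fin.last n)) x (Fin.last n)
      = FEps n k η ρ σ x + x (Fin.last n) * (3 / 2 * max (uEps n k η ρ σ x) 0 ^ ((1 : ℝ) / 2))
          * (ρ (sq1 n k x) * deriv σ (x (Fin.last n))) := by
  have hiA : Fin.last n ∉ Finset.univ.filter
      (fun j : Fin (n + 1) => (j : ℕ) < k + 1) := by
    simp [Fin.val_last]; omega
  have hiB : Fin.last n ∉ Finset.univ.filter
      (fun j : Fin (n + 1) => k + 1 ≤ (j : ℕ) ∧ (j : ℕ) < n) := by
    simp [Fin.val_last]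
  simp only [grad]
  rw [(key_hasFDerivAt n k η ρ σ hρ hσ x).fderiv]
  simp only [ContinuousLinearMap.add_apply, ContinuousLinearMap.coe_smul', Pi.smul_apply,
    ContinuousLinearMap.sub_apply, sumD_apply, pr_apply, smul_eq_mul,
    Pi.single_eq_same, if_neg hiA, if_neg hiB]
  ring
private lemma rho_deriv_nonpos (ρ : ℝ → ℝ) (hρd : Differentiable ℝ ρ)
    (hρ01 : ∀ u, 0 ≤ ρ u ∧ ρ u ≤ 1) (hρ0 : ρ 0 = 1) (hρanti : AntitoneOn ρ (Set.Ici 0)) :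
    ∀ a : ℝ, 0 ≤ a → deriv ρ a ≤ 0 := by
  intro a ha
  rcases ha.lt_or_eq with hpos | hzero
  · have hd := (hρd a).hasDerivAt
    have htend : Filter.Tendsto (slope ρ a) (nhdsWithin a (Set.Ioi a)) (nhds (deriv ρ a)) :=
      (hasDerivAt_iff_tendsto_slope.1 hd).mono_left
        (nhdsWithin_mono a fun w hw => Set.mem_compl_singleton_iff.mpr (ne_of_gt hw))
    refine le_of_tendsto htend ?_
    filter_upwards [self_mem_nhdsWithin] with w hw
    have hw' : a < w := hw
    rw [slope_def_field]
    apply div_nonpos_iff.mpr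
    refine Or.inr ⟨?_, by linarith⟩
    have := hρanti (Set.mem_Ici.mpr ha) (Set.mem_Ici.mpr (ha.trans hw'.le)) hw'.le
    linarith
  · rw [← hzero]
    have hmax : IsLocalMax ρ 0 := Filter.Eventually.of_forall fun w => by
      rw [hρ0]; exact (hρ01 w).2
    rw [hmax.deriv_eq_zero]

private lemma rho_convex_facts (η ε : ℝ) (hη : 0 < η) (hε : 0 < ε) (ρ : ℝ → ℝ)
    (hρC : ContDiff ℝ (⊤ : ℕ∞) ρ) (hρ0 : ρ 0 = 1)
    (hρsupp : ∀ u, η + 2 / 3 * ε ≤ u → ρ u = 0)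
    (hconv : ∀ x : ℝ, 0 < iteratedDeriv 2 (fun y => y ^ 2 + ρ (y ^ 2) * (η + ε / 2)) x) :
    (∀ a, 0 < a → 0 ≤ 1 + deriv ρ a * (η + ε / 2)) ∧
      (∀ a, 0 ≤ a → a ≤ η + 2 / 3 * ε → a + ρ a * (η + ε / 2) ≤ η + 2 / 3 * ε) := by
  set c := η + ε / 2 with hc
  set g := fun y : ℝ => y ^ 2 + ρ (y ^ 2) * c with hg
  have hρd : Differentiable ℝ ρ := hρC.differentiable (by simp)
  have hgC : ContDiff ℝ (⊤ : ℕ∞) g := by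
    apply ContDiff.add
    · exact contDiff_id.pow 2
    · exact (hρC.comp (contDiff_id.pow 2)).mul contDiff_const
  have hg' : ∀ y : ℝ, HasDerivAt g (2 * y + deriv ρ (y ^ 2) * (2 * y) * c) y := by
    intro y
    have h1 : HasDerivAt (fun y : ℝ => y ^ 2) (2 * y) y := by
      simpa using hasDerivAt_pow 2 y
    have h2 : HasDerivAt (fun y : ℝ => ρ (y ^ 2)) (deriv ρ (y ^ 2) * (2 * y)) y :=
      HasDerivAt.comp y (hρd (y ^ 2)).hasDerivAt h1
    exact h1.add (h2.mul_const c)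
  have hderiv_g : deriv g = fun y => 2 * y + deriv ρ (y ^ 2) * (2 * y) * c :=
    funext fun y => (hg' y).deriv
  have h2pos : ∀ x, 0 < deriv (deriv g) x := by
    intro x
    have h := hconv x
    rw [iteratedDeriv_eq_iterate] at h
    exact h
  have hmono : StrictMono (deriv g) := strictMono_of_deriv_pos h2pos
  have hconvex : ConvexOn ℝ Set.univ g :=
    (hmono.strictConvexOn_univ_of_deriv hgC.continuous).convexOn
  have hg'0 : deriv g 0 = 0 := by rw [hderiv_g]; norm_num
  constructor
  · intro a ha
    have hy : 0 < Real.sqrt a := Real.sqrt_pos.2 ha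
    have h1 : 0 < deriv g (Real.sqrt a) := by
      rw [← hg'0]; exact hmono hy
    rw [hderiv_g] at h1
    have h1' : 0 < 2 * Real.sqrt a + deriv ρ (Real.sqrt a ^ 2) * (2 * Real.sqrt a) * c := h1
    have hsq : Real.sqrt a ^ 2 = a := Real.sq_sqrt ha.le
    rw [hsq] at h1'
    clear h1
    by_contra hlt
    push_neg at hlt
    nlinarith [h1', hy]
  · intro a ha0 ha1
    have hb0 : (0:ℝ) ≤ Real.sqrt (η + 2 / 3 * ε) := Real.sqrt_nonneg _
    have hbsq : Real.sqrt (η + 2 / 3 * ε) ^ 2 = η + 2 / 3 * ε := Real.sq_sqrt (by positivity)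
    have hwb : Real.sqrt a ≤ Real.sqrt (η + 2 / 3 * ε) := Real.sqrt_le_sqrt ha1
    have hseg : Real.sqrt a ∈ segment ℝ (0:ℝ) (Real.sqrt (η + 2 / 3 * ε)) := by
      rw [segment_eq_Icc hb0]
      exact ⟨Real.sqrt_nonneg a, hwb⟩
    have hle := hconvex.le_on_segment (Set.mem_univ 0) (Set.mem_univ _) hseg
    have hg0 : g 0 = c := by simp [hg, hρ0]
    have hgb : g (Real.sqrt (η + 2 / 3 * ε)) = η + 2 / 3 * ε := by
      simp only [hg]
      rw [hbsq, hρsupp _ le_rfl]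
      ring
    have hga : g (Real.sqrt a) = a + ρ a * c := by
      simp only [hg]
      rw [Real.sq_sqrt ha0]
    rw [hga, hg0, hgb] at hle
    have hmax : max c (η + 2 / 3 * ε) = η + 2 / 3 * ε := max_eq_right (by rw [hc]; linarith)
    rw [hmax] at hle
    exact hle
open Filter Topology in
private lemma mem_W_congr (n k : ℕ) (η : ℝ) (ρ σ ρ' σ' : ℝ → ℝ) (x y : Fin (n + 1) → ℝ)
    (h : uEps n k η ρ σ =ᶠ[𝓝 x] uEps n k η ρ' σ') :
    ((x, y) ∈ W n (FEps n k η ρ σ) (uEps n k η ρ σ)) ↔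
      ((x, y) ∈ W n (FEps n k η ρ' σ') (uEps n k η ρ' σ')) := by
  have hval : uEps n k η ρ σ x = uEps n k η ρ' σ' x := h.self_of_nhds
  have hF : (fun w => FEps n k η ρ σ w * w (Fin.last n)) =ᶠ[𝓝 x]
      (fun w => FEps n k η ρ' σ' w * w (Fin.last n)) := by
    filter_upwards [h] with w hw
    rw [FEps, FEps, hw]
  have hgrad : grad n (fun w => FEps n k η ρ σ w * w (Fin.last n)) x
      = grad n (fun w => FEps n k η ρ' σ' w * w (Fin.last n)) x := by
    funext i
    simp only [grad]
    rw [hF.fderiv_eq]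
  simp only [W, Set.mem_setOf_eq, hval, hgrad]

private lemma mem_W_congr_pt (n k : ℕ) (hk : k + 1 ≤ n) (η : ℝ) (ρ σ τ : ℝ → ℝ)
    (hρd : Differentiable ℝ ρ) (hσd : Differentiable ℝ σ) (hτd : Differentiable ℝ τ)
    (x y : Fin (n + 1) → ℝ)
    (h0 : ρ (sq1 n k x) = 0) (h1 : deriv ρ (sq1 n k x) = 0) :
    ((x, y) ∈ W n (FEps n k η ρ σ) (uEps n k η ρ σ)) ↔
      ((x, y) ∈ W n (FEps n k η ρ τ) (uEps n k η ρ τ)) := by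
  have hval : uEps n k η ρ σ x = uEps n k η ρ τ x := by
    rw [uEps, uEps, h0]; ring
  have hFval : FEps n k η ρ σ x = FEps n k η ρ τ x := by
    rw [FEps, FEps, hval]
  have hgrad : grad n (fun w => FEps n k η ρ σ w * w (Fin.last n)) x
      = grad n (fun w => FEps n k η ρ τ w * w (Fin.last n)) x := by
    funext i
    rcases lt_or_ge (i : ℕ) (k + 1) with hik | hik
    · rw [grad_first n k hk η ρ σ hρd hσd x i hik, grad_first n k hk η ρ τ hρd hτd x i hik,
        hval, h1]
      ring
    · rcases lt_or_ge (i : ℕ) n with hin | hin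
      · rw [grad_second n k hk η ρ σ hρd hσd x i hik hin,
          grad_second n k hk η ρ τ hρd hτd x i hik hin, hval]
      · have hi : i = Fin.last n := by
          have := i.isLt
          apply Fin.ext
          simp only [Fin.val_last]
          omega
        rw [hi, grad_last n k hk η ρ σ hρd hσd x, grad_last n k hk η ρ τ hρd hτd x,
          hval, hFval, h0]
        ring
  simp only [W, Set.mem_setOf_eq, hval, hgrad]
set_option maxHeartbeats 1000000 in
private lemma mem_U_of_case3
    (n k : ℕ) (hk : k + 1 ≤ n) (η ε ε' : ℝ) (hη : 0 < η) (hε : 0 < ε) (hε1 : ε ≤ 1)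
    (hεη : ε ≤ η / 100) (he1 : 2 / 3 * ε ≤ ε') (he2 : ε' ≤ ε)
    (ρ σ : ℝ → ℝ) (hρd : Differentiable ℝ ρ) (hσd : Differentiable ℝ σ)
    (hρ01 : ∀ u, 0 ≤ ρ u ∧ ρ u ≤ 1)
    (hρ'np : ∀ a, 0 ≤ a → deriv ρ a ≤ 0)
    (hρcv : ∀ a, 0 < a → 0 ≤ 1 + deriv ρ a * (η + ε / 2))
    (hσ01 : ∀ a, 0 ≤ σ a ∧ σ a ≤ η + ε / 2)
    (hσ' : ∀ a, 0 ≤ deriv σ a ∧ deriv σ a ≤ (η + ε) * ε ^ (-(1 : ℝ) / 3))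
    (hσ'top : ∀ a, 1 + ε ^ ((1 : ℝ) / 3) ≤ a → deriv σ a = 0)
    (x y : Fin (n + 1) → ℝ)
    (hxy : (x, y) ∈ W n (FEps n k η ρ σ) (uEps n k η ρ σ))
    (hs : sq1 n k x < η + 2 / 3 * ε)
    (hG : sq1 n k x + ρ (sq1 n k x) * (η + ε / 2) ≤ η + 2 / 3 * ε) :
    (x, y) ∈ U n k η ε' := by
  have hε' : 0 < ε' := lt_of_lt_of_le (by linarith) he1
  simp only [W, Set.mem_setOf_eq] at hxy
  obtain ⟨hu0, hz, hy⟩ := hxy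
  set s := sq1 n k x with hs_def
  set t := sq2 n k x with ht_def
  set z := x (Fin.last n) with hz_def
  set u := uEps n k η ρ σ x with hu_def
  have hs0 : (0:ℝ) ≤ s := Finset.sum_nonneg fun i _ => sq_nonneg _
  have ht0 : (0:ℝ) ≤ t := Finset.sum_nonneg fun i _ => sq_nonneg _
  have huexp : u = s - t + ρ s * σ z - η := rfl
  have hρσ : ρ s * σ z ≤ ρ s * (η + ε / 2) :=
    mul_le_mul_of_nonneg_left (hσ01 z).2 (hρ01 s).1
  have hub : u ≤ 2 / 3 * ε - t := by rw [huexp]; linarith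
  have htub : t ≤ 2 / 3 * ε := by linarith
  have huε' : u ≤ ε' := by linarith
  have hmaxu : max u 0 = u := max_eq_left hu0
  have hsqu : max u 0 ^ ((1:ℝ)/2) = Real.sqrt u := by
    rw [hmaxu, Real.sqrt_eq_rpow]
  have hsu0 : 0 ≤ Real.sqrt u := Real.sqrt_nonneg _
  have hsu_le : Real.sqrt u ≤ Real.sqrt ε' := Real.sqrt_le_sqrt huε'
  simp only [U, Set.mem_setOf_eq]
  refine ⟨by linarith, by linarith, hz, ?_, ?_⟩
  · -- first n coordinates
    intro i hi
    have hyabs : |y i| = |grad n (fun w => FEps n k η ρ σ w * w (Fin.last n)) x i| := by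
      rcases hy with h | h <;> rw [h] <;> simp
    rw [hyabs]
    have hkey : ∃ D : ℝ,
        grad n (fun w => FEps n k η ρ σ w * w (Fin.last n)) x i
          = z * (3 / 2 * max u 0 ^ ((1:ℝ)/2)) * D ∧ |D| ≤ 2 * |x i| ∧ x i ^ 2 < η + ε' := by
      by_cases hik : (i : ℕ) < k + 1
      · refine ⟨2 * x i * (1 + deriv ρ s * σ z),
          grad_first n k hk η ρ σ hρd hσd x i hik, ?_, ?_⟩
        · have hxis : x i ^ 2 ≤ s := by
            rw [hs_def, sq1]
            exact Finset.single_le_sum (f := fun j => x j ^ 2) (fun j _ => sq_nonneg _)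
              (by simp; omega)
          rcases eq_or_ne (x i) 0 with hxi0 | hxi0
          · simp [hxi0]
          · have hx2pos : 0 < x i ^ 2 := pow_pos (abs_pos.mpr hxi0) 2 |>.trans_le
              (le_of_eq (by rw [sq_abs]))
            have hspos : 0 < s := lt_of_lt_of_le hx2pos hxis
            have hq1 : deriv ρ s * σ z ≤ 0 :=
              mul_nonpos_of_nonpos_of_nonneg (hρ'np s hs0) (hσ01 z).1
            have hq2 : -1 ≤ deriv ρ s * σ z := by
              have h3 : deriv ρ s * (η + ε / 2) ≤ deriv ρ s * σ z :=
                mul_le_mul_of_nonpos_left (hσ01 z).2 (hρ'np s hs0)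
              have h4 := hρcv s hspos
              linarith
            rw [abs_mul]
            have habs1 : |1 + deriv ρ s * σ z| ≤ 1 := abs_le.mpr ⟨by linarith, by linarith⟩
            calc |2 * x i| * |1 + deriv ρ s * σ z| ≤ |2 * x i| * 1 :=
                  mul_le_mul_of_nonneg_left habs1 (abs_nonneg _)
              _ = 2 * |x i| := by rw [mul_one, abs_mul]; norm_num
        · have hxis : x i ^ 2 ≤ s := by
            rw [hs_def, sq1]
            exact Finset.single_le_sum (f := fun j => x j ^ 2) (fun j _ => sq_nonneg _)
              (by simp; omega)
          linarith
      · push_neg at hik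
        refine ⟨-(2 * x i), grad_second n k hk η ρ σ hρd hσd x i hik hi, ?_, ?_⟩
        · rw [abs_neg, abs_mul]
          norm_num
        · have hxit : x i ^ 2 ≤ t := by
            rw [ht_def, sq2]
            exact Finset.single_le_sum (f := fun j => x j ^ 2) (fun j _ => sq_nonneg _)
              (by simp; omega)
          linarith
    obtain ⟨D, hgD, hDle, hxilt⟩ := hkey
    rw [hgD, hsqu]
    have hsqrtpos : 0 < Real.sqrt ε' := Real.sqrt_pos.mpr hε'
    have hzc0 : 0 ≤ z * (3 / 2 * Real.sqrt u) := by positivity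
    rw [abs_mul, abs_of_nonneg hzc0]
    have hxi : |x i| < Real.sqrt (η + ε') := by
      rw [← Real.sqrt_sq_eq_abs]
      exact Real.sqrt_lt_sqrt (sq_nonneg _) hxilt
    have hch1 : z * (3 / 2 * Real.sqrt u) * |D| ≤ z * (3 / 2 * Real.sqrt u) * (2 * |x i|) :=
      mul_le_mul_of_nonneg_left hDle hzc0
    have hch2 : z * (3 / 2 * Real.sqrt u) * (2 * |x i|) ≤
        z * (3 / 2 * Real.sqrt ε') * (2 * |x i|) := by
      have h1 : z * (3 / 2 * Real.sqrt u) ≤ z * (3 / 2 * Real.sqrt ε') := by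
        apply mul_le_mul_of_nonneg_left _ hz.le
        linarith
      apply mul_le_mul_of_nonneg_right h1 (by positivity)
    have hch3 : z * (3 / 2 * Real.sqrt ε') * (2 * |x i|) <
        z * (3 / 2 * Real.sqrt ε') * (2 * Real.sqrt (η + ε')) := by
      apply mul_lt_mul_of_pos_left _ (by positivity)
      linarith
    have hch4 : z * (3 / 2 * Real.sqrt ε') * (2 * Real.sqrt (η + ε')) =
        3 * Real.sqrt (ε' * (η + ε')) * z := by
      rw [Real.sqrt_mul hε'.le]
      ring
    linarith
  · -- last coordinate
    have hyabs : |y (Fin.last n)| =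
        |grad n (fun w => FEps n k η ρ σ w * w (Fin.last n)) x (Fin.last n)| := by
      rcases hy with h | h <;> rw [h] <;> simp
    rw [hyabs, grad_last n k hk η ρ σ hρd hσd x, hsqu]
    have hF0 : 0 ≤ FEps n k η ρ σ x := Real.rpow_nonneg (le_max_right _ _) _
    have hσ'z := hσ' z
    have hT0 : 0 ≤ z * (3 / 2 * Real.sqrt u) * (ρ s * deriv σ z) := by
      apply mul_nonneg (by positivity)
      exact mul_nonneg (hρ01 s).1 hσ'z.1
    rw [abs_of_nonneg (by linarith : (0:ℝ) ≤ FEps n k η ρ σ x +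
      z * (3 / 2 * Real.sqrt u) * (ρ s * deriv σ z))]
    -- bound on F
    have hFle : FEps n k η ρ σ x ≤ ε' ^ ((1:ℝ)/6) * ε' := by
      have h1 : FEps n k η ρ σ x = u ^ ((3:ℝ)/2) := by
        rw [FEps, ← hu_def, hmaxu]
      have h2 : u ^ ((3:ℝ)/2) ≤ ε' ^ ((3:ℝ)/2) := Real.rpow_le_rpow hu0 huε' (by norm_num)
      have h3 : ε' ^ ((3:ℝ)/2) = ε' ^ ((1:ℝ)/6) * ε' ^ ((4:ℝ)/3) := by
        rw [← Real.rpow_add hε']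
        norm_num
      have h4 : ε' ^ ((4:ℝ)/3) ≤ ε' := by
        nth_rewrite 2 [← Real.rpow_one ε']
        exact Real.rpow_le_rpow_of_exponent_ge hε' (le_trans he2 hε1) (by norm_num)
      have h5 : 0 ≤ ε' ^ ((1:ℝ)/6) := Real.rpow_nonneg hε'.le _
      calc FEps n k η ρ σ x = u ^ ((3:ℝ)/2) := h1
        _ ≤ ε' ^ ((3:ℝ)/2) := h2
        _ = ε' ^ ((1:ℝ)/6) * ε' ^ ((4:ℝ)/3) := h3
        _ ≤ ε' ^ ((1:ℝ)/6) * ε' := mul_le_mul_of_nonneg_left h4 h5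
    -- bound on the second term
    have hTle : z * (3 / 2 * Real.sqrt u) * (ρ s * deriv σ z) ≤
        99 / 40 * ε ^ ((1:ℝ)/6) * (η + ε) := by
      rcases eq_or_ne (deriv σ z) 0 with h0 | h0
      · rw [h0, mul_zero, mul_zero]
        have h6 : 0 ≤ ε ^ ((1:ℝ)/6) := Real.rpow_nonneg hε.le _
        exact mul_nonneg (mul_nonneg (by norm_num) h6) (by linarith)
      · have hzle : z ≤ 1 + ε ^ ((1:ℝ)/3) := by
          by_contra hcon
          push_neg at hcon
          exact h0 (hσ'top z hcon.le)
        have hz2 : z ≤ 2 := by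
          have h7 : ε ^ ((1:ℝ)/3) ≤ 1 := Real.rpow_le_one hε.le hε1 (by norm_num)
          linarith
        have hsu : Real.sqrt u ≤ 33 / 40 * Real.sqrt ε := by
          have h1 : Real.sqrt u ≤ Real.sqrt (2 / 3 * ε) := Real.sqrt_le_sqrt (by linarith)
          have h2 : Real.sqrt (2 / 3 * ε) = Real.sqrt (2/3 : ℝ) * Real.sqrt ε :=
            Real.sqrt_mul (by norm_num) _
          have h3 : Real.sqrt (2/3 : ℝ) ≤ 33 / 40 := by
            calc Real.sqrt (2/3 : ℝ) ≤ Real.sqrt ((33/40)^2) := Real.sqrt_le_sqrt (by norm_num)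
              _ = 33 / 40 := Real.sqrt_sq (by norm_num)
          calc Real.sqrt u ≤ Real.sqrt (2/3 : ℝ) * Real.sqrt ε := by rw [← h2]; exact h1
            _ ≤ 33 / 40 * Real.sqrt ε := mul_le_mul_of_nonneg_right h3 (Real.sqrt_nonneg ε)
        have ha0 : 0 ≤ (3:ℝ) / 2 * Real.sqrt u := by positivity
        have hb0 : 0 ≤ ρ s * deriv σ z := mul_nonneg (hρ01 s).1 hσ'z.1
        have hbM : ρ s * deriv σ z ≤ (η + ε) * ε ^ (-(1:ℝ)/3) := by
          calc ρ s * deriv σ z ≤ 1 * deriv σ z :=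
                mul_le_mul_of_nonneg_right (hρ01 s).2 hσ'z.1
            _ = deriv σ z := one_mul _
            _ ≤ (η + ε) * ε ^ (-(1:ℝ)/3) := hσ'z.2
        have h1 : z * (3 / 2 * Real.sqrt u) ≤ 2 * (99 / 80 * Real.sqrt ε) := by
          have hh1 : z * (3 / 2 * Real.sqrt u) ≤ 2 * (3 / 2 * Real.sqrt u) :=
            mul_le_mul_of_nonneg_right hz2 ha0
          have hh2 : 2 * ((3:ℝ) / 2 * Real.sqrt u) ≤ 2 * (99 / 80 * Real.sqrt ε) := by
            linarith
          linarith
        have hkey : z * (3 / 2 * Real.sqrt u) * (ρ s * deriv σ z) ≤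
            2 * (99 / 80 * Real.sqrt ε) * ((η + ε) * ε ^ (-(1:ℝ)/3)) := by
          apply mul_le_mul h1 hbM hb0 (by positivity)
        have hε16 : Real.sqrt ε * ε ^ (-(1:ℝ)/3) = ε ^ ((1:ℝ)/6) := by
          rw [Real.sqrt_eq_rpow, ← Real.rpow_add hε]
          norm_num
        calc z * (3 / 2 * Real.sqrt u) * (ρ s * deriv σ z)
            ≤ 2 * (99 / 80 * Real.sqrt ε) * ((η + ε) * ε ^ (-(1:ℝ)/3)) := hkey
          _ = 99 / 40 * (Real.sqrt ε * ε ^ (-(1:ℝ)/3)) * (η + ε) := by ring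
          _ = 99 / 40 * ε ^ ((1:ℝ)/6) * (η + ε) := by rw [hε16]
    -- right-hand side lower bound
    have hEp : 0 < ε ^ ((1:ℝ)/6) := Real.rpow_pos_of_pos hε _
    have h1 : 14 / 15 * ε ^ ((1:ℝ)/6) ≤ ε' ^ ((1:ℝ)/6) := by
      have h2 : ((2:ℝ)/3) ^ ((1:ℝ)/6) * ε ^ ((1:ℝ)/6) = (2/3 * ε) ^ ((1:ℝ)/6) :=
        (Real.mul_rpow (by norm_num) hε.le).symm
      have h3 : ((2:ℝ)/3 * ε) ^ ((1:ℝ)/6) ≤ ε' ^ ((1:ℝ)/6) :=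
        Real.rpow_le_rpow (by positivity) he1 (by norm_num)
      have h4 : (14:ℝ)/15 ≤ ((2:ℝ)/3) ^ ((1:ℝ)/6) := by
        calc (14:ℝ)/15 = (((14:ℝ)/15) ^ ((6:ℝ))) ^ ((1:ℝ)/6) := by
              rw [← Real.rpow_mul (by norm_num)]
              norm_num
          _ ≤ ((2:ℝ)/3) ^ ((1:ℝ)/6) := by
              apply Real.rpow_le_rpow (by positivity) _ (by norm_num)
              rw [show ((6:ℝ)) = ((6:ℕ):ℝ) by norm_num, Real.rpow_natCast]
              norm_num
      have h5 : 0 ≤ ε ^ ((1:ℝ)/6) := hEp.le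
      calc 14 / 15 * ε ^ ((1:ℝ)/6) ≤ ((2:ℝ)/3) ^ ((1:ℝ)/6) * ε ^ ((1:ℝ)/6) :=
            mul_le_mul_of_nonneg_right h4 h5
        _ = (2/3 * ε) ^ ((1:ℝ)/6) := h2
        _ ≤ ε' ^ ((1:ℝ)/6) := h3
    have hrhs : (42:ℝ)/15 * ε ^ ((1:ℝ)/6) * η ≤ 3 * ε' ^ ((1:ℝ)/6) * (η + ε') := by
      have t1 : 14 / 15 * ε ^ ((1:ℝ)/6) * η ≤ ε' ^ ((1:ℝ)/6) * η :=
        mul_le_mul_of_nonneg_right h1 hη.le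
      have t2 : 0 ≤ ε' ^ ((1:ℝ)/6) * ε' := mul_nonneg (Real.rpow_nonneg hε'.le _) hε'.le
      linarith
    have hεE : ε' ^ ((1:ℝ)/6) ≤ ε ^ ((1:ℝ)/6) :=
      Real.rpow_le_rpow hε'.le he2 (by norm_num)
    have h7 : ε' ^ ((1:ℝ)/6) * ε' ≤ ε ^ ((1:ℝ)/6) * ε :=
      mul_le_mul hεE he2 hε'.le hEp.le
    have h9 : ε ^ ((1:ℝ)/6) * (ε + 99/40 * (η + ε)) < ε ^ ((1:ℝ)/6) * (42/15 * η) :=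
      mul_lt_mul_of_pos_left (by linarith) hEp
    linarith [hFle, hTle, hrhs, h7, h9]
open Filter Topology in
/-- For every `η > 0` there is `ε₀ ∈ (0,1]` such that for all `0 < ε ≤ ε₀`, all admissible
cut-off functions `ρ`, `σ`, and all `(2/3)ε ≤ ε′ ≤ ε`, the handle model `W_ε` and the
cylindrical model `W_0` coincide outside `U_{ε′}`. -/
theorem handle_coincides_with_cylinder_outside_U
    (n k : ℕ) (hn : 1 ≤ n) (hk : k + 1 ≤ n) :
    ∀ η : ℝ, 0 < η → ∃ ε₀ : ℝ, 0 < ε₀ ∧ ε₀ ≤ 1 ∧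
      ∀ ε : ℝ, 0 < ε → ε ≤ ε₀ →
      ∀ ρ σ : ℝ → ℝ,
        ContDiff ℝ (⊤ : ℕ∞) ρ →
        (∀ u, 0 ≤ ρ u ∧ ρ u ≤ 1) →
        AntitoneOn ρ (Set.Ici 0) →
        ρ 0 = 1 →
        (∀ u, η + 2 / 3 * ε ≤ u → ρ u = 0) →
        (∀ x : ℝ, 0 < iteratedDeriv 2 (fun y => y ^ 2 + ρ (y ^ 2) * (η + ε / 2)) x) →
        ContDiff ℝ (⊤ : ℕ∞) σ →
        Monotone σ →
        (∀ x, 0 ≤ deriv σ x ∧ deriv σ x ≤ (η + ε) * ε ^ (-(1 : ℝ) / 3)) →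
        (∀ x, x ≤ 1 - ε ^ ((1 : ℝ) / 3) → σ x = 0) →
        (∀ x, 1 + ε ^ ((1 : ℝ) / 3) ≤ x → σ x = η + ε / 2) →
        σ 1 = η →
        0 < deriv σ 1 →
      ∀ ε' : ℝ, 2 / 3 * ε ≤ ε' → ε' ≤ ε →
        W n (FEps n k η ρ σ) (uEps n k η ρ σ) \ U n k η ε' =
          W n (F0 n k η) (u0 n k η) \ U n k η ε' := by
  intro η hη
  refine ⟨min 1 (η / 100), lt_min one_pos (by positivity), min_le_left _ _, ?_⟩
  intro ε hε hεle ρ σ hρC hρ01 hρanti hρ0 hρsupp hconv hσC hσmono hσderiv hσbot hσtop hσ1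
    hσd1 ε' he1 he2
  have hε1 : ε ≤ 1 := le_trans hεle (min_le_left _ _)
  have hεη : ε ≤ η / 100 := le_trans hεle (min_le_right _ _)
  have hρd : Differentiable ℝ ρ := hρC.differentiable (by simp)
  have hσd : Differentiable ℝ σ := hσC.differentiable (by simp)
  have hσ0d : Differentiable ℝ (fun _ : ℝ => (0:ℝ)) := differentiable_const 0
  have hρ'np : ∀ a : ℝ, 0 ≤ a → deriv ρ a ≤ 0 :=
    rho_deriv_nonpos ρ hρd hρ01 hρ0 hρanti
  obtain ⟨hρcv, hGb⟩ := rho_convex_facts η ε hη hε ρ hρC hρ0 hρsupp hconv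
  have hσ01 : ∀ a, 0 ≤ σ a ∧ σ a ≤ η + ε / 2 := by
    intro a
    constructor
    · rcases le_total a (1 - ε ^ ((1:ℝ)/3)) with h | h
      · rw [hσbot a h]
      · rw [← hσbot (1 - ε ^ ((1:ℝ)/3)) le_rfl]
        exact hσmono h
    · rcases le_total a (1 + ε ^ ((1:ℝ)/3)) with h | h
      · rw [← hσtop (1 + ε ^ ((1:ℝ)/3)) le_rfl]
        exact hσmono h
      · rw [hσtop a h]
  have hσ'top : ∀ a, 1 + ε ^ ((1:ℝ)/3) ≤ a → deriv σ a = 0 := by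
    intro a ha
    have hmax : IsLocalMax σ a := Filter.Eventually.of_forall fun w => by
      rw [hσtop a ha]; exact (hσ01 w).2
    exact hmax.deriv_eq_zero
  have hσ001 : ∀ a : ℝ, 0 ≤ (fun _ : ℝ => (0:ℝ)) a ∧ (fun _ : ℝ => (0:ℝ)) a ≤ η + ε / 2 :=
    fun a => ⟨le_rfl, by simp; linarith⟩
  have hσ0' : ∀ a : ℝ, 0 ≤ deriv (fun _ : ℝ => (0:ℝ)) a ∧
      deriv (fun _ : ℝ => (0:ℝ)) a ≤ (η + ε) * ε ^ (-(1 : ℝ) / 3) := by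
    intro a
    rw [deriv_const]
    exact ⟨le_rfl, mul_nonneg (by linarith) (Real.rpow_nonneg hε.le _)⟩
  have hσ0'top : ∀ a : ℝ, 1 + ε ^ ((1:ℝ)/3) ≤ a → deriv (fun _ : ℝ => (0:ℝ)) a = 0 :=
    fun a _ => deriv_const a 0
  have hWeq : W n (F0 n k η) (u0 n k η) =
      W n (FEps n k η ρ (fun _ => 0)) (uEps n k η ρ (fun _ => 0)) := by
    have h1 : u0 n k η = uEps n k η ρ (fun _ => 0) := by
      funext w
      rw [u0, uEps]
      ring
    have h2 : F0 n k η = FEps n k η ρ (fun _ => 0) := by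
      funext w
      rw [F0, FEps, h1]
    rw [h1, h2]
  rw [hWeq]
  ext ⟨x, y⟩
  simp only [Set.mem_diff]
  have hs0 : (0:ℝ) ≤ sq1 n k x := Finset.sum_nonneg fun i _ => sq_nonneg _
  have main : (x, y) ∉ U n k η ε' →
      (((x, y) ∈ W n (FEps n k η ρ σ) (uEps n k η ρ σ)) ↔
        ((x, y) ∈ W n (FEps n k η ρ (fun _ => 0)) (uEps n k η ρ (fun _ => 0)))) := by
    intro hU
    rcases lt_trichotomy (sq1 n k x) (η + 2 / 3 * ε) with hlt | heq | hgt
    · have hG := hGb (sq1 n k x) hs0 hlt.le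
      refine iff_of_false (fun hmem => hU ?_) (fun hmem => hU ?_)
      · exact mem_U_of_case3 n k hk η ε ε' hη hε hε1 hεη he1 he2 ρ σ hρd hσd hρ01 hρ'np
          hρcv hσ01 hσderiv hσ'top x y hmem hlt hG
      · exact mem_U_of_case3 n k hk η ε ε' hη hε hε1 hεη he1 he2 ρ (fun _ => 0) hρd hσ0d
          hρ01 hρ'np hρcv hσ001 hσ0' hσ0'top x y hmem hlt hG
    · have h0 : ρ (sq1 n k x) = 0 := hρsupp _ heq.ge
      have h1 : deriv ρ (sq1 n k x) = 0 := by
        have hmin : IsLocalMin ρ (sq1 n k x) := Filter.Eventually.of_forall fun w => by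
          rw [h0]; exact (hρ01 w).1
        exact hmin.deriv_eq_zero
      exact mem_W_congr_pt n k hk η ρ σ (fun _ => 0) hρd hσd hσ0d x y h0 h1
    · apply mem_W_congr
      have hc : Continuous (sq1 n k) := by
        unfold sq1
        exact continuous_finset_sum _ fun i _ => (continuous_apply i).pow 2
      have hopen : {w : Fin (n + 1) → ℝ | η + 2 / 3 * ε < sq1 n k w} ∈ 𝓝 x :=
        (isOpen_lt continuous_const hc).mem_nhds hgt
      filter_upwards [hopen] with w hw
      rw [uEps, uEps, hρsupp _ (le_of_lt hw)]
      ring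
  constructor
  · rintro ⟨h1, h2⟩
    exact ⟨(main h2).1 h1, h2⟩
  · rintro ⟨h1, h2⟩
    exact ⟨(main h2).2 h1, h2⟩

end LegendrianSurgery
end

section
/- For every y ∈ [0, η + ε/2], the function f_y(x) = x² + ρ(x²)·y has strictly positive second derivative at every x ∈ ℝ; moreover, for every ε′ ≥ (2/3)ε and every x ∈ ℝ with x² < η + ε′, one has y ≤ f_y(x) < η + ε′. -/
/-- For every `y ∈ [0, η + ε/2]`, the function `f_y(x) = x² + ρ(x²)·y` has strictly positive
second derivative everywhere; moreover for every `ε′ ≥ (2/3)ε` and every `x` with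
`x² < η + ε′`, one has `y ≤ f_y(x) < η + ε′`. -/
theorem fy_strictly_convex_and_bounded
    (η ε : ℝ) (hη : 0 < η) (hε : 0 < ε) (ρ : ℝ → ℝ)
    (hρ_smooth : ContDiff ℝ (⊤ : ℕ∞) ρ)
    (hρ_bd : ∀ u, 0 ≤ ρ u ∧ ρ u ≤ 1)
    (hρ_anti : AntitoneOn ρ (Set.Ici 0))
    (hρ_zero : ρ 0 = 1)
    (hρ_vanish : ∀ u, η + 2 / 3 * ε ≤ u → ρ u = 0)
    (hρ_conv : ∀ x : ℝ, 0 < iteratedDeriv 2 (fun y => y ^ 2 + ρ (y ^ 2) * (η + ε / 2)) x) :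
    ∀ y : ℝ, 0 ≤ y → y ≤ η + ε / 2 →
      (∀ x : ℝ, 0 < iteratedDeriv 2 (fun x => x ^ 2 + ρ (x ^ 2) * y) x) ∧
      (∀ ε' : ℝ, 2 / 3 * ε ≤ ε' → ∀ x : ℝ, x ^ 2 < η + ε' →
        y ≤ x ^ 2 + ρ (x ^ 2) * y ∧ x ^ 2 + ρ (x ^ 2) * y < η + ε') := by
  intro y hy0 hy1
  set C : ℝ := η + ε / 2 with hCdef
  have hC0 : 0 < C := by dsimp [C]; linarith
  clear_value C
  have hsqc : ContDiff ℝ 2 (fun x : ℝ => x ^ 2) := by fun_prop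
  have hh : ContDiff ℝ 2 (fun x : ℝ => ρ (x ^ 2)) :=
    (hρ_smooth.of_le (by exact WithTop.coe_le_coe.mpr le_top)).comp hsqc
  have key : ∀ (c x : ℝ), iteratedDeriv 2 (fun x : ℝ => x ^ 2 + ρ (x ^ 2) * c) x
      = 2 + iteratedDeriv 2 (fun x : ℝ => ρ (x ^ 2)) x * c := by
    intro c x
    have e : (fun x : ℝ => x ^ 2 + ρ (x ^ 2) * c)
        = (fun x : ℝ => x ^ 2) + fun x : ℝ => c * ρ (x ^ 2) := by
      funext z; simp [mul_comm]
    have hsq : iteratedDeriv 2 (fun x : ℝ => x ^ 2) x = 2 := by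
      rw [iteratedDeriv_succ, iteratedDeriv_one]
      have hd : deriv (fun x : ℝ => x ^ 2) = fun x : ℝ => 2 * x := by
        funext z
        simp [deriv_pow]
      rw [hd]
      have : HasDerivAt (fun x : ℝ => 2 * x) 2 x := by
        simpa using (hasDerivAt_id x).const_mul (2 : ℝ)
      exact this.deriv
    rw [e, ← iteratedDerivWithin_univ,
      iteratedDerivWithin_add (Set.mem_univ x) uniqueDiffOn_univ
        (hsqc.contDiffWithinAt) ((contDiff_const.mul hh).contDiffWithinAt),
      iteratedDerivWithin_const_mul (Set.mem_univ x) uniqueDiffOn_univ c hh.contDiffWithinAt,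
      iteratedDerivWithin_univ, iteratedDerivWithin_univ, hsq]
    ring
  -- Strict convexity of the reference function F
  have hFcont : Continuous (fun x : ℝ => x ^ 2 + ρ (x ^ 2) * C) :=
    (hsqc.add (hh.mul contDiff_const)).continuous
  have hFc : StrictConvexOn ℝ Set.univ (fun x : ℝ => x ^ 2 + ρ (x ^ 2) * C) := by
    apply strictConvexOn_univ_of_deriv2_pos hFcont
    intro x
    have h := hρ_conv x
    rwa [iteratedDeriv_eq_iterate] at h
  -- Strict monotonicity of u ↦ u + ρ(u) * C on [0, ∞)
  have hmono : ∀ u v : ℝ, 0 ≤ u → u < v → u + ρ u * C < v + ρ v * C := by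
    intro u v hu huv
    have hv : 0 < v := lt_of_le_of_lt hu huv
    set a := Real.sqrt u with ha
    set b := Real.sqrt v with hb
    have ha2 : a ^ 2 = u := Real.sq_sqrt hu
    have hb2 : b ^ 2 = v := Real.sq_sqrt hv.le
    have hab : a < b := Real.sqrt_lt_sqrt hu huv
    have ha0 : 0 ≤ a := Real.sqrt_nonneg u
    have hb0 : 0 < b := lt_of_le_of_lt ha0 hab
    set t : ℝ := (b - a) / (2 * b) with ht
    have ht0 : 0 < t := div_pos (by linarith) (by linarith)
    have ht1 : t < 1 := by
      rw [ht, div_lt_one (by linarith)]; linarith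
    have hne : (-b : ℝ) ≠ b := by intro h; linarith
    have hcomb : t • (-b) + (1 - t) • b = a := by
      simp only [smul_eq_mul]
      rw [ht]
      field_simp
      ring
    have h1t : (0 : ℝ) < 1 - t := by linarith
    have htt : t + (1 - t) = 1 := by ring
    have hsc := hFc.2 (Set.mem_univ (-b)) (Set.mem_univ b) hne ht0 h1t htt
    rw [hcomb] at hsc
    simp only [smul_eq_mul, neg_pow, even_two.neg_pow] at hsc
    have hsc' : a ^ 2 + ρ (a ^ 2) * C < b ^ 2 + ρ (b ^ 2) * C := by
      have : t * (b ^ 2 + ρ (b ^ 2) * C) + (1 - t) * (b ^ 2 + ρ (b ^ 2) * C)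
          = b ^ 2 + ρ (b ^ 2) * C := by ring
      calc a ^ 2 + ρ (a ^ 2) * C
          < t * ((-b) ^ 2 + ρ ((-b) ^ 2) * C) + (1 - t) * (b ^ 2 + ρ (b ^ 2) * C) := by
            simpa using hsc
        _ = b ^ 2 + ρ (b ^ 2) * C := by rw [neg_pow]; simp; ring
    rwa [ha2, hb2] at hsc'
  -- Consequence: C ≤ u + ρ(u) * C for u ≥ 0
  have hlow : ∀ u : ℝ, 0 ≤ u → C ≤ u + ρ u * C := by
    intro u hu
    rcases eq_or_lt_of_le hu with h | h
    · rw [← h, hρ_zero]; simp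
    · have := hmono 0 u le_rfl h
      rw [hρ_zero] at this
      linarith
  refine ⟨?_, ?_⟩
  · -- positivity of second derivative
    intro x
    rw [key]
    have h1 := hρ_conv x
    rw [key] at h1
    set c := iteratedDeriv 2 (fun x : ℝ => ρ (x ^ 2)) x with hc
    rcases le_or_gt 0 c with h | h
    · nlinarith
    · nlinarith
  · intro ε' hε' x hx
    have hu0 : (0 : ℝ) ≤ x ^ 2 := sq_nonneg x
    obtain ⟨hρ0, hρ1⟩ := hρ_bd (x ^ 2)
    constructor
    · -- lower bound : y ≤ x² + ρ(x²) y
      have h1 := hlow (x ^ 2) hu0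
      -- C(1 - ρ(x²)) ≤ x², and y ≤ C, 1 - ρ ≥ 0
      nlinarith
    · -- upper bound
      rcases lt_or_ge (x ^ 2) (η + 2 / 3 * ε) with h | h
      · have h2 := hmono (x ^ 2) (η + 2 / 3 * ε) hu0 h
        rw [hρ_vanish _ le_rfl] at h2
        have h3 : x ^ 2 + ρ (x ^ 2) * y ≤ x ^ 2 + ρ (x ^ 2) * C := by
          have := mul_le_mul_of_nonneg_left hy1 hρ0
          linarith
        simp only [zero_mul, add_zero] at h2
        have h4 : η + 2 / 3 * ε ≤ η + ε' := by linarith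
        linarith [h3, h2, h4]
      · rw [hρ_vanish _ h]
        linarith
end

section
/- Let ε′ ≥ (2/3)ε. For every x ∈ ℝ^{n+1} with |x′|² < η + ε′ and |x″|² < ε′, and every index 1 ≤ i ≤ n, the partial derivative of F_ε in the direction x_i satisfies |∂_{x_i} F_ε(x)| < 3√(ε′(η+ε′)). -/
open Finset

namespace LegendrianSurgery

/-- The function `t ↦ max(t,0)^{3/2}` is differentiable with derivative
`(3/2)·√(max(t,0))`. -/
lemma phi_hasDerivAt (t : ℝ) :
    HasDerivAt (fun s : ℝ => max s 0 ^ ((3:ℝ)/2)) (3/2 * Real.sqrt (max t 0)) t := by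
  rcases lt_trichotomy t 0 with ht | ht | ht
  · have hev : (fun s : ℝ => max s 0 ^ ((3:ℝ)/2)) =ᶠ[nhds t] (fun _ => (0:ℝ)) := by
      filter_upwards [eventually_lt_nhds ht] with s hs
      rw [max_eq_right hs.le, Real.zero_rpow (by norm_num)]
    have h0 : HasDerivAt (fun _ : ℝ => (0:ℝ)) 0 t := hasDerivAt_const t 0
    have h2 := h0.congr_of_eventuallyEq hev
    simpa [max_eq_right ht.le, Real.sqrt_zero] using h2
  · subst ht
    rw [max_self, Real.sqrt_zero, mul_zero]
    rw [hasDerivAt_iff_tendsto_slope]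
    have hb : ∀ s : ℝ, ‖slope (fun s : ℝ => max s 0 ^ ((3:ℝ)/2)) 0 s‖ ≤ Real.sqrt |s| := by
      intro s
      rcases le_or_gt s 0 with hs | hs
      · simp [slope, max_eq_right hs, Real.zero_rpow (by norm_num : ((3:ℝ)/2) ≠ 0),
          Real.sqrt_nonneg]
      · have hmax : max s 0 = s := max_eq_left hs.le
        have hval : slope (fun s : ℝ => max s 0 ^ ((3:ℝ)/2)) 0 s
            = s ^ ((3:ℝ)/2) / s := by
          simp [slope, hmax, max_self, Real.zero_rpow (by norm_num : ((3:ℝ)/2) ≠ 0),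
            div_eq_inv_mul]
        have h2 : s ^ ((3:ℝ)/2) / s = s ^ ((3:ℝ)/2 - 1) := by
          rw [Real.rpow_sub hs, Real.rpow_one]
        rw [hval, h2, show (3:ℝ)/2 - 1 = 1/2 by norm_num, ← Real.sqrt_eq_rpow,
          Real.norm_eq_abs, abs_of_nonneg (Real.sqrt_nonneg s), abs_of_pos hs]
    have hlim : Filter.Tendsto (fun s : ℝ => Real.sqrt |s|) (nhdsWithin 0 {0}ᶜ) (nhds 0) := by
      have h3 : Filter.Tendsto (fun s : ℝ => Real.sqrt |s|) (nhds 0) (nhds 0) := by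
        have := (Real.continuous_sqrt.comp continuous_abs).tendsto 0
        simpa [Function.comp_def] using this
      exact h3.mono_left nhdsWithin_le_nhds
    exact squeeze_zero_norm hb hlim
  · have hev : (fun s : ℝ => max s 0 ^ ((3:ℝ)/2)) =ᶠ[nhds t] (fun s => s ^ ((3:ℝ)/2)) := by
      filter_upwards [eventually_gt_nhds ht] with s hs
      rw [max_eq_left hs.le]
    have h1 : HasDerivAt (fun s : ℝ => s ^ ((3:ℝ)/2)) (3/2 * t ^ ((3:ℝ)/2 - 1)) t :=
      Real.hasDerivAt_rpow_const (Or.inl ht.ne')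
    have h2 := h1.congr_of_eventuallyEq hev
    have h3 : t ^ ((3:ℝ)/2 - 1) = Real.sqrt (max t 0) := by
      rw [max_eq_left ht.le, show (3:ℝ)/2 - 1 = 1/2 by norm_num, ← Real.sqrt_eq_rpow]
    rwa [h3] at h2

/-- Derivative of a finite sum of coordinate squares. -/
lemma sumsq_hasFDerivAt (n : ℕ) (s : Finset (Fin (n+1))) (x : Fin (n+1) → ℝ) :
    HasFDerivAt (fun x : Fin (n+1) → ℝ => ∑ j ∈ s, x j ^ 2)
      (∑ j ∈ s, (2 * x j) • (ContinuousLinearMap.proj j : (Fin (n+1) → ℝ) →L[ℝ] ℝ)) x := by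
  apply HasFDerivAt.fun_sum
  intro j hj
  have hp : HasFDerivAt (fun x : Fin (n+1) → ℝ => x j)
      (ContinuousLinearMap.proj j : (Fin (n+1) → ℝ) →L[ℝ] ℝ) x :=
    (ContinuousLinearMap.proj j : (Fin (n+1) → ℝ) →L[ℝ] ℝ).hasFDerivAt
  have h2 := hp.fun_mul hp
  have e1 : (fun x : Fin (n+1) → ℝ => x j * x j) = fun x => x j ^ 2 := by funext y; ring
  rw [e1] at h2
  rw [two_mul, add_smul]
  exact h2

/-- The final numeric estimate. -/
lemma bound_aux (u E m M : ℝ) (hm : 0 < m) (hM : 0 < M) (hu : max u 0 ≤ m)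
    (hE : E^2 < 4*M) :
    |3/2 * Real.sqrt (max u 0) * E| < 3 * Real.sqrt (m * M) := by
  have hmax0 : (0:ℝ) ≤ max u 0 := le_max_right u 0
  apply lt_of_pow_lt_pow_left₀ 2 (by positivity)
  have h1 : (3 * Real.sqrt (m*M))^2 = 9*(m*M) := by
    rw [mul_pow, Real.sq_sqrt (by positivity)]; norm_num
  have h2 : |3/2 * Real.sqrt (max u 0) * E|^2 = 9/4 * (max u 0) * E^2 := by
    rw [sq_abs, mul_pow, mul_pow, Real.sq_sqrt hmax0]; ring
  rw [h1, h2]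
  nlinarith [sq_nonneg E]

/-- Bound on the first-block derivative factor, via convexity of `q`. -/
lemma Efactor_bound (ρ : ℝ → ℝ) (η ε ε' : ℝ) (q : ℝ → ℝ) (σs s xi : ℝ)
    (hcp : 0 < η + ε/2) (hηε'p : 0 < η + ε')
    (hσ0 : 0 ≤ σs) (hσc : σs ≤ η + ε/2)
    (hs_nonneg : 0 ≤ s) (hs_lt : s < η + ε') (hxi : xi^2 ≤ s)
    (hdq_eq : deriv q = fun y => 2*y + deriv ρ (y^2) * (2*y) * (η+ε/2))
    (hsm : StrictMono (deriv q)) (hdq0 : deriv q 0 = 0)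
    (hρ_deriv_zero : deriv ρ (η+ε') = 0) :
    (2 * xi + σs * (deriv ρ s * (2 * xi)))^2 < 4 * (η + ε') := by
  rcases eq_or_lt_of_le hs_nonneg with hs0 | hs0
  · have hsq0 : xi ^ 2 = 0 := le_antisymm (by rw [← hs0] at hxi; exact hxi) (sq_nonneg _)
    have hxi0 : xi = 0 := by
      have := sq_nonneg xi
      nlinarith
    rw [hxi0]
    have hz : (2 * (0:ℝ) + σs * (deriv ρ s * (2 * 0)))^2 = 0 := by ring
    rw [hz]
    linarith
  · set y : ℝ := Real.sqrt s with hy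
    have hyp : 0 < y := Real.sqrt_pos.mpr hs0
    have hysq : y^2 = s := Real.sq_sqrt hs_nonneg
    set lam : ℝ := σs / (η + ε/2) with hlam
    have hlam0 : 0 ≤ lam := div_nonneg hσ0 hcp.le
    have hlam1 : lam ≤ 1 := (div_le_one hcp).mpr hσc
    have hlamc : lam * (η + ε/2) = σs := div_mul_cancel₀ σs hcp.ne'
    set H : ℝ → ℝ := fun z => (1-lam)*(2*z) + lam * deriv q z with hH
    have hHsm : StrictMono H := by
      intro a b hab
      have h3 := hsm hab
      simp only [hH]
      rcases le_total (2*b - 2*a) (deriv q b - deriv q a) with hc | hc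
      · nlinarith [mul_le_mul_of_nonneg_left hc hlam0]
      · nlinarith [mul_le_mul_of_nonneg_left hc (by linarith : (0:ℝ) ≤ 1 - lam)]
    have hH0 : H 0 = 0 := by simp [hH, hdq0]
    have hHy : H y = 2*y + σs * (deriv ρ (y^2) * (2*y)) := by
      simp only [hH, hdq_eq]
      linear_combination (deriv ρ (y^2) * (2*y)) * hlamc
    set y2 : ℝ := Real.sqrt (η + ε') with hy2'
    have hy2p : 0 < y2 := Real.sqrt_pos.mpr hηε'p
    have hy22 : y2^2 = η + ε' := Real.sq_sqrt hηε'p.le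
    have hHy2 : H y2 = 2*y2 := by
      simp only [hH, hdq_eq, hy22, hρ_deriv_zero]
      ring
    have hylt : y < y2 := by
      rw [hy, hy2']
      exact Real.sqrt_lt_sqrt hs_nonneg hs_lt
    have hHynn : 0 ≤ H y := by
      rw [← hH0]
      exact hHsm.monotone hyp.le
    have hHlt : H y < 2*y2 := by rw [← hHy2]; exact hHsm hylt
    have hxiy : |xi| ≤ y := by
      rw [hy, ← Real.sqrt_sq_eq_abs]
      exact Real.sqrt_le_sqrt hxi
    set E : ℝ := 2 * xi + σs * (deriv ρ s * (2 * xi)) with hE'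
    have hEy : E * y = xi * H y := by
      rw [hHy, hysq, hE']
      ring
    have habs : |E| * y = |xi| * H y := by
      calc |E| * y = |E * y| := by rw [abs_mul, abs_of_pos hyp]
        _ = |xi * H y| := by rw [hEy]
        _ = |xi| * H y := by rw [abs_mul, abs_of_nonneg hHynn]
    have hEle : |E| ≤ H y := by
      have h4 : |xi| * H y ≤ y * H y := mul_le_mul_of_nonneg_right hxiy hHynn
      have h5 : |E| * y ≤ H y * y := by rw [habs]; linarith [h4]
      exact le_of_mul_le_mul_right h5 hyp
    have hElt : |E| < 2*y2 := lt_of_le_of_lt hEle hHlt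
    nlinarith [abs_nonneg E, sq_abs E, hy22]

set_option maxHeartbeats 1000000 in
/-- Let `ε′ ≥ (2/3)ε`. For every `x` with `|x′|² < η + ε′` and `|x″|² < ε′` and every
`1 ≤ i ≤ n`, the partial derivative of `F_ε` in direction `x_i` satisfies
`|∂_{x_i} F_ε(x)| < 3√(ε′(η+ε′))`. -/
theorem FEps_partial_deriv_bound
    (n k : ℕ) (hn : 1 ≤ n) (hk : k + 1 ≤ n)
    (η ε : ℝ) (hη : 0 < η) (hε : 0 < ε) (ρ σ : ℝ → ℝ)
    (hρ_smooth : ContDiff ℝ (⊤ : ℕ∞) ρ)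
    (hρ_bd : ∀ u, 0 ≤ ρ u ∧ ρ u ≤ 1)
    (hρ_anti : AntitoneOn ρ (Set.Ici 0))
    (hρ_zero : ρ 0 = 1)
    (hρ_vanish : ∀ u, η + 2 / 3 * ε ≤ u → ρ u = 0)
    (hρ_conv : ∀ x : ℝ, 0 < iteratedDeriv 2 (fun y => y ^ 2 + ρ (y ^ 2) * (η + ε / 2)) x)
    (hσ_smooth : ContDiff ℝ (⊤ : ℕ∞) σ)
    (hσ_mono : Monotone σ)
    (hσ_deriv : ∀ x, 0 ≤ deriv σ x ∧ deriv σ x ≤ (η + ε) * ε ^ (-(1 : ℝ) / 3))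
    (hσ_left : ∀ x, x ≤ 1 - ε ^ ((1 : ℝ) / 3) → σ x = 0)
    (hσ_right : ∀ x, 1 + ε ^ ((1 : ℝ) / 3) ≤ x → σ x = η + ε / 2)
    (hσ_one : σ 1 = η)
    (hσ_deriv_one : 0 < deriv σ 1)
    (ε' : ℝ) (hε' : 2 / 3 * ε ≤ ε') :
    ∀ x : Fin (n + 1) → ℝ, sq1 n k x < η + ε' → sq2 n k x < ε' →
      ∀ i : Fin (n + 1), (i : ℕ) < n →
        |fderiv ℝ (FEps n k η ρ σ) x (Pi.single i 1)| <
          3 * Real.sqrt (ε' * (η + ε')) := by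
  -- basic positivity facts
  have hε'p : (0:ℝ) < ε' := lt_of_lt_of_le (by positivity) hε'
  have hcp : (0:ℝ) < η + ε/2 := by positivity
  have hηε'p : (0:ℝ) < η + ε' := by positivity
  have hηε'b : η + 2/3*ε ≤ η + ε' := by linarith
  -- the auxiliary convex function q
  set q : ℝ → ℝ := fun y => y ^ 2 + ρ (y ^ 2) * (η + ε / 2) with hqdef
  have hdq : ∀ y : ℝ, HasDerivAt q (2*y + deriv ρ (y^2) * (2*y) * (η+ε/2)) y := by
    intro y
    have hy2 : HasDerivAt (fun y : ℝ => y^2) (2*y) y := by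
      simpa using hasDerivAt_pow 2 y
    have hρy : HasDerivAt ρ (deriv ρ (y^2)) (y^2) :=
      ((hρ_smooth.differentiable (by simp)) (y^2)).hasDerivAt
    have hcomp : HasDerivAt (fun y : ℝ => ρ (y^2)) (deriv ρ (y^2) * (2*y)) y := by
      have := HasDerivAt.comp (h₂ := ρ) (h := fun y : ℝ => y^2) y hρy hy2
      simpa [Function.comp_def] using this
    exact hy2.add (hcomp.mul_const _)
  have hdq_eq : deriv q = fun y => 2*y + deriv ρ (y^2) * (2*y) * (η+ε/2) :=
    funext fun y => (hdq y).deriv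
  have hsm : StrictMono (deriv q) := by
    apply strictMono_of_deriv_pos
    intro y
    have h2 : iteratedDeriv 2 q = deriv (deriv q) := by
      rw [iteratedDeriv_succ, iteratedDeriv_one]
    have := hρ_conv y
    rw [h2] at this
    exact this
  have hdq0 : deriv q 0 = 0 := by rw [hdq_eq]; norm_num
  have hdq_nonneg : ∀ y : ℝ, 0 ≤ y → 0 ≤ deriv q y := by
    intro y hy
    rw [← hdq0]
    exact hsm.monotone hy
  have hqmono : MonotoneOn q (Set.Ici 0) := by
    apply monotoneOn_of_deriv_nonneg (convex_Ici 0)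
    · exact (Differentiable.continuous (fun y => (hdq y).differentiableAt)).continuousOn
    · exact fun y _ => (hdq y).differentiableAt.differentiableWithinAt
    · intro y hy
      rw [interior_Ici] at hy
      exact hdq_nonneg y hy.le
  -- derivative of ρ vanishes at η + ε'
  have hρ_deriv_zero : deriv ρ (η+ε') = 0 := by
    have h0 : ρ (η+ε') = 0 := hρ_vanish _ hηε'b
    have hmin : IsLocalMin ρ (η+ε') := by
      apply Filter.Eventually.of_forall
      intro u
      rw [h0]
      exact (hρ_bd u).1
    exact hmin.deriv_eq_zero
  intro x hx1 hx2 i hi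
  -- bounds on σ*
  set σs : ℝ := σ (x (Fin.last n)) with hσs
  have hσ0 : 0 ≤ σs := by
    rcases le_total (x (Fin.last n)) (1 - ε ^ ((1:ℝ)/3)) with h | h
    · rw [hσs, hσ_left _ h]
    · have h2 := hσ_mono h
      rw [hσ_left _ le_rfl] at h2
      exact h2
  have hσc : σs ≤ η + ε/2 := by
    rcases le_total (1 + ε ^ ((1:ℝ)/3)) (x (Fin.last n)) with h | h
    · rw [hσs, hσ_right _ h]
    · have h2 := hσ_mono h
      rw [hσ_right _ le_rfl] at h2
      exact h2
  -- nonnegativity of the sums of squares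
  have hsq1_nonneg : 0 ≤ sq1 n k x := Finset.sum_nonneg (fun j _ => sq_nonneg _)
  have hsq2_nonneg : 0 ≤ sq2 n k x := Finset.sum_nonneg (fun j _ => sq_nonneg _)
  -- key estimate coming from monotonicity of q
  have hkey : ρ (sq1 n k x) * (η + ε/2) ≤ (η + ε') - sq1 n k x := by
    have hy1 : Real.sqrt (sq1 n k x) ≤ Real.sqrt (η+ε') := Real.sqrt_le_sqrt hx1.le
    have h1 := hqmono (Set.mem_Ici.mpr (Real.sqrt_nonneg _))
      (Set.mem_Ici.mpr (Real.sqrt_nonneg _)) hy1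
    simp only [hqdef] at h1
    rw [Real.sq_sqrt hsq1_nonneg, Real.sq_sqrt hηε'p.le, hρ_vanish _ hηε'b] at h1
    linarith
  have huB : uEps n k η ρ σ x ≤ ε' := by
    have h1 : ρ (sq1 n k x) * σs ≤ ρ (sq1 n k x) * (η+ε/2) :=
      mul_le_mul_of_nonneg_left hσc (hρ_bd _).1
    show sq1 n k x - sq2 n k x + ρ (sq1 n k x) * σ (x (Fin.last n)) - η ≤ ε'
    rw [← hσs]
    linarith
  have humax : max (uEps n k η ρ σ x) 0 ≤ ε' := max_le huB hε'p.le
  -- derivative set-up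
  set S1 : Finset (Fin (n+1)) := univ.filter (fun j : Fin (n+1) => (j:ℕ) < k+1) with hS1
  set S2 : Finset (Fin (n+1)) := univ.filter
    (fun j : Fin (n+1) => k+1 ≤ (j:ℕ) ∧ (j:ℕ) < n) with hS2
  set L1 : (Fin (n+1) → ℝ) →L[ℝ] ℝ :=
    ∑ j ∈ S1, (2 * x j) • (ContinuousLinearMap.proj j : (Fin (n+1) → ℝ) →L[ℝ] ℝ) with hL1
  set L2 : (Fin (n+1) → ℝ) →L[ℝ] ℝ :=
    ∑ j ∈ S2, (2 * x j) • (ContinuousLinearMap.proj j : (Fin (n+1) → ℝ) →L[ℝ] ℝ) with hL2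
  have h1 : HasFDerivAt (sq1 n k) L1 x := sumsq_hasFDerivAt n S1 x
  have h2 : HasFDerivAt (sq2 n k) L2 x := sumsq_hasFDerivAt n S2 x
  have hρd : HasDerivAt ρ (deriv ρ (sq1 n k x)) (sq1 n k x) :=
    ((hρ_smooth.differentiable (by simp)) (sq1 n k x)).hasDerivAt
  have hρc : HasFDerivAt (fun x => ρ (sq1 n k x)) ((deriv ρ (sq1 n k x)) • L1) x :=
    hρd.comp_hasFDerivAt x h1
  have hσd : HasDerivAt σ (deriv σ (x (Fin.last n))) (x (Fin.last n)) :=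
    ((hσ_smooth.differentiable (by simp)) (x (Fin.last n))).hasDerivAt
  have hσcmp : HasFDerivAt (fun x : Fin (n+1) → ℝ => σ (x (Fin.last n)))
      ((deriv σ (x (Fin.last n))) •
        (ContinuousLinearMap.proj (Fin.last n) : (Fin (n+1) → ℝ) →L[ℝ] ℝ)) x :=
    hσd.comp_hasFDerivAt x
      (ContinuousLinearMap.proj (Fin.last n) : (Fin (n+1) → ℝ) →L[ℝ] ℝ).hasFDerivAt
  have hmul := hρc.mul hσcmp
  have hu : HasFDerivAt (uEps n k η ρ σ)
      ((L1 - L2 + (ρ (sq1 n k x) • ((deriv σ (x (Fin.last n))) •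
          (ContinuousLinearMap.proj (Fin.last n) : (Fin (n+1) → ℝ) →L[ℝ] ℝ))
        + σ (x (Fin.last n)) • ((deriv ρ (sq1 n k x)) • L1)))) x :=
    ((h1.sub h2).add hmul).sub_const η
  have hF := (phi_hasDerivAt (uEps n k η ρ σ x)).comp_hasFDerivAt x hu
  rw [Function.comp_def] at hF
  have hfd := hF.fderiv
  show |fderiv ℝ (fun x => max (uEps n k η ρ σ x) 0 ^ ((3:ℝ)/2)) x (Pi.single i 1)| <
    3 * Real.sqrt (ε' * (η + ε'))
  rw [hfd]
  have hL1v : L1 (Pi.single i 1) = if (i:ℕ) < k+1 then 2 * x i else 0 := by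
    rw [hL1]
    simp only [ContinuousLinearMap.coe_sum', Finset.sum_apply,
      ContinuousLinearMap.smul_apply, ContinuousLinearMap.proj_apply, Pi.single_apply,
      smul_eq_mul, mul_ite, mul_one, mul_zero]
    rw [Finset.sum_ite_eq' S1 i (fun j => 2 * x j)]
    simp [hS1]
  have hL2v : L2 (Pi.single i 1) = if (k+1 ≤ (i:ℕ) ∧ (i:ℕ) < n) then 2 * x i else 0 := by
    rw [hL2]
    simp only [ContinuousLinearMap.coe_sum', Finset.sum_apply,
      ContinuousLinearMap.smul_apply, ContinuousLinearMap.proj_apply, Pi.single_apply,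
      smul_eq_mul, mul_ite, mul_one, mul_zero]
    rw [Finset.sum_ite_eq' S2 i (fun j => 2 * x j)]
    simp [hS2]
  have hlast : Fin.last n ≠ i := by
    intro h
    rw [← h] at hi
    simp [Fin.last] at hi
  simp only [ContinuousLinearMap.smul_apply, ContinuousLinearMap.add_apply,
    ContinuousLinearMap.sub_apply, smul_eq_mul, hL1v, hL2v,
    ContinuousLinearMap.proj_apply, Pi.single_apply, if_neg hlast, mul_zero, zero_add]
  rcases lt_or_ge (i:ℕ) (k+1) with hik | hik
  · -- first block
    have hnotS2 : ¬ (k+1 ≤ (i:ℕ) ∧ (i:ℕ) < n) := fun h => absurd hik (not_lt.mpr h.1)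
    rw [if_pos hik, if_neg hnotS2, sub_zero]
    have hxi : x i ^ 2 ≤ sq1 n k x := by
      show x i ^ 2 ≤ ∑ j ∈ Finset.univ.filter (fun j : Fin (n + 1) => (j : ℕ) < k + 1), x j ^ 2
      exact Finset.single_le_sum (fun j _ => sq_nonneg (x j))
        (Finset.mem_filter.mpr ⟨Finset.mem_univ i, hik⟩)
    -- bound the derivative factor
    have hE : (2 * x i + σ (x (Fin.last n)) * (deriv ρ (sq1 n k x) * (2 * x i)))^2
        < 4 * (η + ε') := by
      rw [← hσs]
      exact Efactor_bound ρ η ε ε' q σs (sq1 n k x) (x i) hcp hηε'p hσ0 hσc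
        hsq1_nonneg hx1 hxi hdq_eq hsm hdq0 hρ_deriv_zero
    exact bound_aux _ _ _ _ hε'p hηε'p humax hE
  · -- second block
    have hS2mem : k+1 ≤ (i:ℕ) ∧ (i:ℕ) < n := ⟨hik, hi⟩
    rw [if_neg (by omega), if_pos hS2mem]
    have hxi : x i ^ 2 ≤ sq2 n k x := by
      show x i ^ 2 ≤ ∑ j ∈ Finset.univ.filter
        (fun j : Fin (n + 1) => k + 1 ≤ (j : ℕ) ∧ (j : ℕ) < n), x j ^ 2
      exact Finset.single_le_sum (fun j _ => sq_nonneg (x j))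
        (Finset.mem_filter.mpr ⟨Finset.mem_univ i, hS2mem⟩)
    have hE : (0 - 2 * x i + σ (x (Fin.last n)) * (deriv ρ (sq1 n k x) * 0))^2
        < 4 * (η + ε') := by
      have h6 : (0 - 2 * x i + σ (x (Fin.last n)) * (deriv ρ (sq1 n k x) * 0))^2
          = 4 * (x i ^2) := by ring
      rw [h6]
      nlinarith
    exact bound_aux _ _ _ _ hε'p hηε'p humax hE

end LegendrianSurgery
end

section
/- Let ε′ ≥ (2/3)ε. For every x ∈ ℝ^{n+1} with |x′|² < η + ε′, |x″|² < ε′ and x_{n+1} > 0, one has |∂_{x_{n+1}}(F_ε(x)·x_{n+1})| ≤ F_ε(x) + (3/2)·F_ε(x)^{1/3}·x_{n+1}·σ′(x_{n+1}) < (ε′)^{3/2} + (3/2)·(ε′)^{1/2}·(1+ε^{1/3})·ε^{−1/3}·(η+ε). -/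
open Finset

namespace LegendrianSurgery

private lemma cos32 : Real.cos (3/2 * Real.pi) = 0 := by
  have h : (3/2 : ℝ) * Real.pi = Real.pi + Real.pi/2 := by ring
  rw [h, Real.cos_add, Real.cos_pi, Real.sin_pi, Real.cos_pi_div_two]; ring

private lemma rpow32_eq_max (r : ℝ) : r ^ ((3:ℝ)/2) = max r 0 ^ ((3:ℝ)/2) := by
  rcases le_or_gt 0 r with h | h
  · rw [max_eq_left h]
  · rw [max_eq_right h.le, Real.zero_rpow (by norm_num), Real.rpow_def_of_neg h, cos32, mul_zero]

private lemma rpow12_eq_max (r : ℝ) : r ^ ((1:ℝ)/2) = max r 0 ^ ((1:ℝ)/2) := by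
  rcases le_or_gt 0 r with h | h
  · rw [max_eq_left h]
  · rw [max_eq_right h.le, Real.zero_rpow (by norm_num), Real.rpow_def_of_neg h,
      show (1:ℝ)/2 * Real.pi = Real.pi/2 by ring, Real.cos_pi_div_two, mul_zero]

private lemma hasDerivAt_rpow32 (r : ℝ) :
    HasDerivAt (fun s : ℝ => s ^ ((3:ℝ)/2)) ((3:ℝ)/2 * r ^ ((1:ℝ)/2)) r := by
  have h := Real.hasDerivAt_rpow_const (x := r) (p := 3/2) (Or.inr (by norm_num))
  convert h using 2
  norm_num

private lemma phi_mono (ρ : ℝ → ℝ) (c : ℝ) (hρ_smooth : ContDiff ℝ (⊤ : ℕ∞) ρ)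
    (hconv : ∀ x : ℝ, 0 < iteratedDeriv 2 (fun y => y ^ 2 + ρ (y ^ 2) * c) x) :
    StrictMonoOn (fun y => y ^ 2 + ρ (y ^ 2) * c) (Set.Ici 0) := by
  have hρ_diff : Differentiable ℝ ρ := hρ_smooth.differentiable (by simp)
  set φ : ℝ → ℝ := fun y => y ^ 2 + ρ (y ^ 2) * c with hφdef
  have hφ_smooth : ContDiff ℝ (⊤ : ℕ∞) φ :=
    (contDiff_id.pow 2).add ((hρ_smooth.comp (contDiff_id.pow 2)).mul contDiff_const)
  have hφ'mono : StrictMono (deriv φ) := by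
    apply strictMono_of_deriv_pos
    intro y
    have h := hconv y
    rwa [iteratedDeriv_succ, iteratedDeriv_one] at h
  have hφ'0 : deriv φ 0 = 0 := by
    have hp : HasDerivAt (fun y : ℝ => y ^ 2) (2 * (0:ℝ) ^ 1) 0 := hasDerivAt_pow 2 0
    have hρ0 : HasDerivAt (fun y : ℝ => ρ (y ^ 2) * c)
        (deriv ρ ((0:ℝ)^2) * (2 * (0:ℝ) ^ 1) * c) 0 :=
      (((hρ_diff ((0:ℝ)^2)).hasDerivAt).comp 0 hp).mul_const _
    have h := (hp.add hρ0).deriv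
    rw [show φ = ((fun y : ℝ => y ^ 2) + fun y => ρ (y ^ 2) * c) from rfl, h]; norm_num
  apply strictMonoOn_of_deriv_pos (convex_Ici 0) hφ_smooth.continuous.continuousOn
  intro y hy
  rw [interior_Ici] at hy
  have := hφ'mono hy
  rwa [hφ'0] at this

set_option maxHeartbeats 1000000 in
/-- Let `ε′ ≥ (2/3)ε`. For every `x` with `|x′|² < η + ε′`, `|x″|² < ε′` and `x_{n+1} > 0`,
`|∂_{x_{n+1}}(F_ε(x)·x_{n+1})| ≤ F_ε(x) + (3/2)·F_ε(x)^{1/3}·x_{n+1}·σ′(x_{n+1})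
  < (ε′)^{3/2} + (3/2)·(ε′)^{1/2}·(1+ε^{1/3})·ε^{−1/3}·(η+ε)`. -/
theorem FEps_last_partial_deriv_bound
    (n k : ℕ) (hn : 1 ≤ n) (hk : k + 1 ≤ n)
    (η ε : ℝ) (hη : 0 < η) (hε : 0 < ε) (ρ σ : ℝ → ℝ)
    (hρ_smooth : ContDiff ℝ (⊤ : ℕ∞) ρ)
    (hρ_bd : ∀ u, 0 ≤ ρ u ∧ ρ u ≤ 1)
    (hρ_anti : AntitoneOn ρ (Set.Ici 0))
    (hρ_zero : ρ 0 = 1)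
    (hρ_vanish : ∀ u, η + 2 / 3 * ε ≤ u → ρ u = 0)
    (hρ_conv : ∀ x : ℝ, 0 < iteratedDeriv 2 (fun y => y ^ 2 + ρ (y ^ 2) * (η + ε / 2)) x)
    (hσ_smooth : ContDiff ℝ (⊤ : ℕ∞) σ)
    (hσ_mono : Monotone σ)
    (hσ_deriv : ∀ x, 0 ≤ deriv σ x ∧ deriv σ x ≤ (η + ε) * ε ^ (-(1 : ℝ) / 3))
    (hσ_left : ∀ x, x ≤ 1 - ε ^ ((1 : ℝ) / 3) → σ x = 0)
    (hσ_right : ∀ x, 1 + ε ^ ((1 : ℝ) / 3) ≤ x → σ x = η + ε / 2)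
    (hσ_one : σ 1 = η)
    (hσ_deriv_one : 0 < deriv σ 1)
    (ε' : ℝ) (hε' : 2 / 3 * ε ≤ ε') :
    ∀ x : Fin (n + 1) → ℝ, sq1 n k x < η + ε' → sq2 n k x < ε' → 0 < x (Fin.last n) →
      |fderiv ℝ (fun y => FEps n k η ρ σ y * y (Fin.last n)) x (Pi.single (Fin.last n) 1)| ≤
          FEps n k η ρ σ x +
            3 / 2 * FEps n k η ρ σ x ^ ((1 : ℝ) / 3) * x (Fin.last n) *
              deriv σ (x (Fin.last n)) ∧
        FEps n k η ρ σ x +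
            3 / 2 * FEps n k η ρ σ x ^ ((1 : ℝ) / 3) * x (Fin.last n) *
              deriv σ (x (Fin.last n)) <
          ε' ^ ((3 : ℝ) / 2) +
            3 / 2 * ε' ^ ((1 : ℝ) / 2) * (1 + ε ^ ((1 : ℝ) / 3)) * ε ^ (-(1 : ℝ) / 3) *
              (η + ε) := by
  intro x hx1 hx2 hxt
  have hσ_diff : Differentiable ℝ σ := hσ_smooth.differentiable (by simp)
  have hρ_diff : Differentiable ℝ ρ := hρ_smooth.differentiable (by simp)
  set L := Fin.last n with hLdef
  set t := x L with htdef
  set c1 := sq1 n k x with hc1def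
  set c2 := sq2 n k x with hc2def
  have hc1_nonneg : 0 ≤ c1 := Finset.sum_nonneg fun i _ => sq_nonneg _
  have hc2_nonneg : 0 ≤ c2 := Finset.sum_nonneg fun i _ => sq_nonneg _
  have hε'pos : 0 < ε' := lt_of_lt_of_le (by positivity) hε'
  set S := deriv σ t with hSdef
  have hS_nonneg : 0 ≤ S := (hσ_deriv t).1
  -- rewrite FEps as rpow of uEps
  have hfun : (fun y => FEps n k η ρ σ y * y L)
      = (fun y => uEps n k η ρ σ y ^ ((3:ℝ)/2) * y L) := by
    funext y
    rw [FEps, ← rpow32_eq_max]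
  rw [hfun]
  -- differentiability
  have hsq1_diff : Differentiable ℝ (sq1 n k) := by
    unfold sq1
    exact Differentiable.fun_sum fun i _ =>
      ((ContinuousLinearMap.proj i : (Fin (n+1) → ℝ) →L[ℝ] ℝ).differentiable).pow 2
  have hsq2_diff : Differentiable ℝ (sq2 n k) := by
    unfold sq2
    exact Differentiable.fun_sum fun i _ =>
      ((ContinuousLinearMap.proj i : (Fin (n+1) → ℝ) →L[ℝ] ℝ).differentiable).pow 2
  have hevalL : Differentiable ℝ (fun y : Fin (n+1) → ℝ => y L) :=
    (ContinuousLinearMap.proj L : (Fin (n+1) → ℝ) →L[ℝ] ℝ).differentiable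
  have hu_diff : Differentiable ℝ (uEps n k η ρ σ) := by
    unfold uEps
    exact ((hsq1_diff.sub hsq2_diff).add
      ((hρ_diff.comp hsq1_diff).mul (hσ_diff.comp hevalL))).sub_const η
  have hF_diff : DifferentiableAt ℝ (fun y => uEps n k η ρ σ y ^ ((3:ℝ)/2)) x :=
    (hasDerivAt_rpow32 (uEps n k η ρ σ x)).differentiableAt.comp x (hu_diff x)
  have hG_diff : DifferentiableAt ℝ (fun y => uEps n k η ρ σ y ^ ((3:ℝ)/2) * y L) x :=
    hF_diff.mul ((hevalL x))
  set v : Fin (n+1) → ℝ := Pi.single L 1 with hvdef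
  have hline : HasDerivAt (fun s : ℝ => x + s • v) v 0 := by
    simpa using ((hasDerivAt_id (0:ℝ)).smul_const v).const_add x
  have hchain : HasDerivAt
      (fun s : ℝ => uEps n k η ρ σ (x + s • v) ^ ((3:ℝ)/2) * (x + s • v) L)
      (fderiv ℝ (fun y => uEps n k η ρ σ y ^ ((3:ℝ)/2) * y L) x v) 0 := by
    have hG2 : HasFDerivAt (fun y => uEps n k η ρ σ y ^ ((3:ℝ)/2) * y L)
        (fderiv ℝ (fun y => uEps n k η ρ σ y ^ ((3:ℝ)/2) * y L) x) (x + (0:ℝ) • v) := by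
      simpa using hG_diff.hasFDerivAt
    exact hG2.comp_hasDerivAt 0 hline
  -- coordinates along the line
  have hcoord : ∀ (s : ℝ) (i : Fin (n+1)), (i : ℕ) < n → (x + s • v) i = x i := by
    intro s i hi
    have hne : i ≠ L := by
      intro h
      rw [h, hLdef] at hi
      simp [Fin.val_last] at hi
    simp [hvdef, Pi.single_eq_of_ne hne]
  have hsq1s : ∀ s : ℝ, sq1 n k (x + s • v) = c1 := by
    intro s
    rw [hc1def]
    unfold sq1
    refine Finset.sum_congr rfl fun i hi => ?_
    simp only [Finset.mem_filter] at hi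
    rw [hcoord s i (lt_of_lt_of_le hi.2 hk)]
  have hsq2s : ∀ s : ℝ, sq2 n k (x + s • v) = c2 := by
    intro s
    rw [hc2def]
    unfold sq2
    refine Finset.sum_congr rfl fun i hi => ?_
    simp only [Finset.mem_filter] at hi
    rw [hcoord s i hi.2.2]
  have hlast : ∀ s : ℝ, (x + s • v) L = t + s := by
    intro s
    simp [hvdef, Pi.single_eq_same, htdef]
  have hgfun : (fun s : ℝ => uEps n k η ρ σ (x + s • v) ^ ((3:ℝ)/2) * (x + s • v) L)
      = fun s : ℝ => (c1 - c2 + ρ c1 * σ (t + s) - η) ^ ((3:ℝ)/2) * (t + s) := by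
    funext s
    rw [show uEps n k η ρ σ (x + s • v) = c1 - c2 + ρ c1 * σ (t + s) - η by
      unfold uEps; rw [hsq1s, hsq2s, hlast], hlast]
  rw [hgfun] at hchain
  -- 1D derivative computation
  set U := c1 - c2 + ρ c1 * σ t - η with hUdef
  have hline2 : HasDerivAt (fun s : ℝ => t + s) 1 0 := (hasDerivAt_id 0).const_add t
  have hσcomp : HasDerivAt (fun s : ℝ => σ (t + s)) S 0 := by
    have h := ((hσ_diff (t + 0)).hasDerivAt).comp 0 hline2
    simpa [hSdef, Function.comp_def] using h
  have hw : HasDerivAt (fun s : ℝ => c1 - c2 + ρ c1 * σ (t + s) - η) (ρ c1 * S) 0 := by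
    simpa using ((hσcomp.const_mul (ρ c1)).const_add (c1 - c2)).sub_const η
  have hrpow : HasDerivAt (fun s : ℝ => (c1 - c2 + ρ c1 * σ (t + s) - η) ^ ((3:ℝ)/2))
      ((3:ℝ)/2 * U ^ ((1:ℝ)/2) * (ρ c1 * S)) 0 := by
    have h := (hasDerivAt_rpow32 (c1 - c2 + ρ c1 * σ (t + 0) - η)).comp 0 hw
    simpa [hUdef, Function.comp_def] using h
  have hgd : HasDerivAt
      (fun s : ℝ => (c1 - c2 + ρ c1 * σ (t + s) - η) ^ ((3:ℝ)/2) * (t + s))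
      ((3:ℝ)/2 * U ^ ((1:ℝ)/2) * (ρ c1 * S) * t + U ^ ((3:ℝ)/2)) 0 := by
    have h := hrpow.fun_mul hline2
    simpa [hUdef] using h
  have hD : fderiv ℝ (fun y => uEps n k η ρ σ y ^ ((3:ℝ)/2) * y L) x v
      = (3:ℝ)/2 * U ^ ((1:ℝ)/2) * (ρ c1 * S) * t + U ^ ((3:ℝ)/2) :=
    hchain.unique hgd
  rw [hD]
  -- rewrite in terms of M = max U 0
  have hUeq : uEps n k η ρ σ x = U := rfl
  set M := max U 0 with hMdef
  have hM_nonneg : 0 ≤ M := le_max_right _ _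
  have hFeq : FEps n k η ρ σ x = M ^ ((3:ℝ)/2) := rfl
  have hU32 : U ^ ((3:ℝ)/2) = M ^ ((3:ℝ)/2) := rpow32_eq_max U
  have hU12 : U ^ ((1:ℝ)/2) = M ^ ((1:ℝ)/2) := rpow12_eq_max U
  have hF13 : FEps n k η ρ σ x ^ ((1:ℝ)/3) = M ^ ((1:ℝ)/2) := by
    rw [hFeq, ← Real.rpow_mul hM_nonneg]
    norm_num
  rw [hF13, hFeq, hU32, hU12]
  have hM12_nonneg : 0 ≤ M ^ ((1:ℝ)/2) := Real.rpow_nonneg hM_nonneg _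
  have hM32_nonneg : 0 ≤ M ^ ((3:ℝ)/2) := Real.rpow_nonneg hM_nonneg _
  have hρ1 : 0 ≤ ρ c1 := (hρ_bd c1).1
  have hρ2 : ρ c1 ≤ 1 := (hρ_bd c1).2
  constructor
  · -- first inequality
    rw [abs_of_nonneg (by positivity)]
    have h1 : (3:ℝ)/2 * M ^ ((1:ℝ)/2) * (ρ c1 * S) * t ≤ 3/2 * M ^ ((1:ℝ)/2) * t * S := by
      nlinarith [mul_nonneg hM12_nonneg hS_nonneg, mul_nonneg (mul_nonneg hM12_nonneg hS_nonneg) hxt.le]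
    linarith
  · -- strict inequality
    -- Step 1: U < ε'
    have hσle : ∀ s : ℝ, σ s ≤ η + ε/2 := fun s => by
      calc σ s ≤ σ (max s (1 + ε ^ ((1:ℝ)/3))) := hσ_mono (le_max_left _ _)
        _ = η + ε/2 := hσ_right _ (le_max_right _ _)
    have hUlt : U < ε' := by
      have hsqrtlt : Real.sqrt c1 < Real.sqrt (η + ε') := Real.sqrt_lt_sqrt hc1_nonneg hx1
      have key : c1 + ρ c1 * (η + ε / 2) < (η + ε') + ρ (η + ε') * (η + ε / 2) := by
        have h := phi_mono ρ (η + ε / 2) hρ_smooth hρ_conv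
          (Set.mem_Ici.mpr (Real.sqrt_nonneg c1)) (Set.mem_Ici.mpr (Real.sqrt_nonneg (η + ε')))
          hsqrtlt
        simpa [Real.sq_sqrt hc1_nonneg,
          Real.sq_sqrt (show (0:ℝ) ≤ η + ε' by positivity)] using h
      rw [hρ_vanish (η + ε') (by linarith)] at key
      have h1 : ρ c1 * σ t ≤ ρ c1 * (η + ε / 2) := mul_le_mul_of_nonneg_left (hσle t) hρ1
      rw [hUdef]
      nlinarith
    have hMlt : M < ε' := max_lt hUlt hε'pos
    have hM32lt : M ^ ((3:ℝ)/2) < ε' ^ ((3:ℝ)/2) :=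
      Real.rpow_lt_rpow hM_nonneg hMlt (by norm_num)
    have hM12le : M ^ ((1:ℝ)/2) ≤ ε' ^ ((1:ℝ)/2) :=
      Real.rpow_le_rpow hM_nonneg hMlt.le (by norm_num)
    have hεp13 : 0 < ε ^ ((1:ℝ)/3) := Real.rpow_pos_of_pos hε _
    have hεm13 : 0 < ε ^ (-(1:ℝ)/3) := Real.rpow_pos_of_pos hε _
    have htS : t * S ≤ (1 + ε ^ ((1:ℝ)/3)) * ((η + ε) * ε ^ (-(1:ℝ)/3)) := by
      rcases le_or_gt t (1 + ε ^ ((1:ℝ)/3)) with h | h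
      · exact mul_le_mul h (hσ_deriv t).2 hS_nonneg (by positivity)
      · have hS0 : S = 0 := by
          have hev : σ =ᶠ[nhds t] fun _ => η + ε/2 := by
            filter_upwards [Ioi_mem_nhds h] with y hy
            exact hσ_right y (le_of_lt hy)
          rw [hSdef, hev.deriv_eq, deriv_const]
        rw [hS0, mul_zero]
        positivity
    have h2 : (3:ℝ)/2 * M ^ ((1:ℝ)/2) * t * S
        ≤ 3/2 * ε' ^ ((1:ℝ)/2) * (1 + ε ^ ((1:ℝ)/3)) * ε ^ (-(1:ℝ)/3) * (η + ε) := by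
      have htS_nonneg : 0 ≤ t * S := mul_nonneg hxt.le hS_nonneg
      calc (3:ℝ)/2 * M ^ ((1:ℝ)/2) * t * S = 3/2 * (M ^ ((1:ℝ)/2) * (t * S)) := by ring
        _ ≤ 3/2 * (ε' ^ ((1:ℝ)/2) * ((1 + ε ^ ((1:ℝ)/3)) * ((η + ε) * ε ^ (-(1:ℝ)/3)))) := by
            apply mul_le_mul_of_nonneg_left _ (by norm_num)
            exact mul_le_mul hM12le htS htS_nonneg (Real.rpow_nonneg hε'pos.le _)
        _ = 3/2 * ε' ^ ((1:ℝ)/2) * (1 + ε ^ ((1:ℝ)/3)) * ε ^ (-(1:ℝ)/3) * (η + ε) := by ring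
    linarith

end LegendrianSurgery
end

section
/- Let r > 0 and let f be a complex-analytic function on an open set containing the closed disc {z : |z| ≤ r}, with f(z) ≠ 0 for all |z| = r. Then the zero set Z = {w : |w| < r, f(w) = 0} is finite and, for every integer k ≥ 0, (1/2πi)·∮_{|z|=r} z^k · (f′(z)/f(z)) dz = Σ_{w ∈ Z} m_w · w^k, where m_w denotes the order of vanishing of f at w. -/
/-!
Since `f` has no zeros on the circle and is analytic on the connected compact disc, its zeros in
the disc are isolated, hence finitely many, and dividing out `(z - w) ^ m_w` for each of them
gives `f = (∏_w (z - w) ^ m_w) · g` with `g` analytic and zero-free on the closed disc. On the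
circle `z ^ k f'/f = ∑_w m_w z ^ k/(z - w) + z ^ k g'/g`: Cauchy's integral formula turns the
`w`-th term into `2πi m_w w ^ k`, and Cauchy's theorem makes the last term integrate to zero.
-/

open Metric Set Filter Complex Topology Real

section

variable {𝕜 E : Type*} [NontriviallyNormedField 𝕜] [NormedAddCommGroup E] [NormedSpace 𝕜 E]
  {U : Set 𝕜} {f : 𝕜 → 𝕜}

theorem AnalyticOnNhd.exists_eq_pow_mul {w : 𝕜} {n : ℕ} {h : 𝕜 → 𝕜}
    (hf : AnalyticOnNhd 𝕜 f U) (hh : AnalyticAt 𝕜 h w)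
    (hfh : ∀ᶠ z in 𝓝 w, f z = (z - w) ^ n * h z) :
    ∃ g : 𝕜 → 𝕜, AnalyticOnNhd 𝕜 g U ∧ g w = h w ∧ ∀ z, f z = (z - w) ^ n * g z := by
  classical
  set g := Function.update (fun z => f z / (z - w) ^ n) w (h w)
  have hg_of_ne : ∀ z, z ≠ w → g z = f z / (z - w) ^ n := fun z hz =>
    Function.update_of_ne hz _ _
  have hfg : ∀ z, f z = (z - w) ^ n * g z := by
    intro z
    rcases eq_or_ne z w with rfl | hz
    · simpa [g] using hfh.self_of_nhds
    · rw [hg_of_ne z hz, mul_div_cancel₀ _ (pow_ne_zero _ (sub_ne_zero.2 hz))]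
  refine ⟨g, fun z _ => ?_, by simp [g], hfg⟩
  rcases eq_or_ne z w with rfl | hz
  · refine hh.congr ?_
    filter_upwards [hfh] with x hx
    rcases eq_or_ne x z with rfl | hxz
    · simp [g]
    · rw [hg_of_ne x hxz, hx, mul_div_cancel_left₀ _ (pow_ne_zero _ (sub_ne_zero.2 hxz))]
  · refine ((hf z ‹_›).div ((analyticAt_id.sub analyticAt_const).pow n)
      (pow_ne_zero _ (sub_ne_zero.2 hz))).congr ?_
    filter_upwards [eventually_ne_nhds hz] with x hx
    exact (hg_of_ne x hx).symm

theorem AnalyticOnNhd.exists_eq_prod_pow_mul (hf : AnalyticOnNhd 𝕜 f U) (T : Finset 𝕜)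
    (m : 𝕜 → ℕ) (hloc : ∀ w ∈ T, ∃ h : 𝕜 → 𝕜, AnalyticAt 𝕜 h w ∧ h w ≠ 0 ∧
      ∀ᶠ z in 𝓝 w, f z = (z - w) ^ m w * h z) :
    ∃ g : 𝕜 → 𝕜, AnalyticOnNhd 𝕜 g U ∧ (∀ w ∈ T, g w ≠ 0) ∧
      ∀ z, f z = (∏ w ∈ T, (z - w) ^ m w) * g z := by
  classical
  induction T using Finset.induction_on generalizing f with
  | empty => exact ⟨f, hf, by simp, by simp⟩
  | @insert w₀ T hw₀ ih =>
    obtain ⟨h, hh, hh₀, hfh⟩ := hloc w₀ (Finset.mem_insert_self _ _)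
    obtain ⟨g₁, hg₁, hg₁w₀, hfg₁⟩ := hf.exists_eq_pow_mul hh hfh
    have hloc₁ : ∀ w ∈ T, ∃ h : 𝕜 → 𝕜, AnalyticAt 𝕜 h w ∧ h w ≠ 0 ∧
        ∀ᶠ z in 𝓝 w, g₁ z = (z - w) ^ m w * h z := by
      intro w hw
      obtain ⟨h', hh', hh'₀, hfh'⟩ := hloc w (Finset.mem_insert_of_mem hw)
      have hww₀ : w - w₀ ≠ 0 := sub_ne_zero.2 fun hc => hw₀ (hc ▸ hw)
      refine ⟨fun z => h' z / (z - w₀) ^ m w₀,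
        hh'.div ((analyticAt_id.sub analyticAt_const).pow _) (pow_ne_zero _ hww₀),
        div_ne_zero hh'₀ (pow_ne_zero _ hww₀), ?_⟩
      filter_upwards [hfh', eventually_ne_nhds (sub_ne_zero.1 hww₀)] with z hz hzw₀
      have hp : (z - w₀) ^ m w₀ ≠ 0 := pow_ne_zero _ (sub_ne_zero.2 hzw₀)
      rw [← mul_div_assoc, eq_div_iff hp, ← hz, hfg₁, mul_comm]
    obtain ⟨g, hg, hgT, hfg⟩ := ih hg₁ hloc₁
    refine ⟨g, hg, Finset.forall_mem_insert _ _ _ |>.2 ⟨fun hgw₀ => hh₀ ?_, hgT⟩, fun z => ?_⟩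
    · rw [← hg₁w₀, hfg, hgw₀, mul_zero]
    · rw [hfg₁, hfg, Finset.prod_insert hw₀, mul_assoc]

theorem AnalyticOnNhd.finite_setOf_eq_zero {K : Set 𝕜} {f : 𝕜 → E} (hf : AnalyticOnNhd 𝕜 f K)
    (hK : IsCompact K) (hK' : IsPreconnected K) {z₀ : 𝕜} (hz₀ : z₀ ∈ K) (hfz₀ : f z₀ ≠ 0) :
    {z ∈ K | f z = 0}.Finite := by
  have hcodiscrete : {z | f z ≠ 0} ∈ codiscreteWithin K :=
    (hf.eqOn_zero_or_eventually_ne_zero_of_preconnected hK').resolve_left fun h => hfz₀ (h hz₀)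
  simpa [Set.sdiff_eq, Set.ofPred_and, Set.compl_ofPred] using
    hK.finite_sdiff_of_mem_codiscreteWithin hcodiscrete

theorem AnalyticOnNhd.exists_eventually_eq_pow_analyticOrderNatAt_mul {K : Set 𝕜}
    (hf : AnalyticOnNhd 𝕜 f K) (hK : IsPreconnected K) {z₀ : 𝕜} (hz₀ : z₀ ∈ K)
    (hfz₀ : f z₀ ≠ 0) {w : 𝕜} (hw : w ∈ K) :
    ∃ h : 𝕜 → 𝕜, AnalyticAt 𝕜 h w ∧ h w ≠ 0 ∧
      ∀ᶠ z in 𝓝 w, f z = (z - w) ^ analyticOrderNatAt f w * h z := by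
  have hz₀_order : analyticOrderAt f z₀ ≠ ⊤ := by
    simp [analyticOrderAt_eq_zero.2 (Or.inr hfz₀)]
  simpa only [smul_eq_mul, EventuallyEq] using
    (hf w hw).analyticOrderAt_ne_top.1
      (hf.analyticOrderAt_ne_top_of_isPreconnected hK hz₀ hw hz₀_order)

theorem logDeriv_prod_pow_mul {T : Finset 𝕜} {m : 𝕜 → ℕ} {g : 𝕜 → 𝕜} {z : 𝕜} (hz : z ∉ T)
    (hgz : g z ≠ 0) (hg : DifferentiableAt 𝕜 g z) :
    logDeriv (fun x => (∏ w ∈ T, (x - w) ^ m w) * g x) z =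
      ∑ w ∈ T, m w * (z - w)⁻¹ + logDeriv g z := by
  have hzw : ∀ w ∈ T, z - w ≠ 0 := fun w hw => sub_ne_zero.2 fun h => hz (h ▸ hw)
  have hd : ∀ w ∈ T, DifferentiableAt 𝕜 (fun x => (x - w) ^ m w) z := fun w _ => by fun_prop
  rw [logDeriv_mul z (Finset.prod_ne_zero_iff.2 fun w hw => pow_ne_zero _ (hzw w hw)) hgz
    (DifferentiableAt.fun_finsetProd hd) hg,
    logDeriv_prod (f := fun w x => (x - w) ^ m w) (fun w hw => pow_ne_zero _ (hzw w hw)) hd]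
  congr 1
  refine Finset.sum_congr rfl fun w _ => ?_
  rw [logDeriv_fun_pow (by fun_prop), logDeriv_apply]
  simp

theorem AnalyticOnNhd.diffContOnCl_ball {f : 𝕜 → E} {c : 𝕜} {R : ℝ}
    (hf : AnalyticOnNhd 𝕜 f (closedBall c R)) : DiffContOnCl 𝕜 f (ball c R) :=
  (hf.differentiableOn.mono closure_ball_subset_closedBall).diffContOnCl

end

theorem circleIntegral_mul_logDeriv_prod_pow_mul {c : ℂ} {R : ℝ} (hR : 0 ≤ R) {T : Finset ℂ}
    (hT : ∀ w ∈ T, w ∈ ball c R) (m : ℂ → ℕ) {g φ : ℂ → ℂ}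
    (hg : AnalyticOnNhd ℂ g (closedBall c R)) (hg₀ : ∀ z ∈ closedBall c R, g z ≠ 0)
    (hφ : AnalyticOnNhd ℂ φ (closedBall c R)) :
    (∮ z in C(c, R), φ z * logDeriv (fun x => (∏ w ∈ T, (x - w) ^ m w) * g x) z) =
      2 * π * I * ∑ w ∈ T, m w * φ w := by
  have hT_sphere : ∀ z ∈ sphere c R, z ∉ T := fun z hz hzT =>
    (mem_ball.1 (hT z hzT)).ne (mem_sphere.1 hz)
  have hsplit : EqOn (fun z => φ z * logDeriv (fun x => (∏ w ∈ T, (x - w) ^ m w) * g x) z)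
      (fun z => ∑ w ∈ T, m w * ((z - w)⁻¹ * φ z) + φ z * logDeriv g z) (sphere c R) := by
    intro z hz
    have hz' := sphere_subset_closedBall hz
    simp only [logDeriv_prod_pow_mul (hT_sphere z hz) (hg₀ z hz') (hg z hz').differentiableAt,
      mul_add, Finset.mul_sum]
    congr 1
    exact Finset.sum_congr rfl fun w _ => by ring
  have hpole_integrable : ∀ w ∈ T, CircleIntegrable (fun z => m w * ((z - w)⁻¹ * φ z)) c R :=
    fun w hw => ContinuousOn.circleIntegrable hR <| continuousOn_const.mul <|
      ((continuous_sub_right w).continuousOn.inv₀ fun z hz =>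
        sub_ne_zero.2 fun h => hT_sphere z hz (h ▸ hw)).mul
          (hφ.continuousOn.mono sphere_subset_closedBall)
  have hregular : AnalyticOnNhd ℂ (fun z => φ z * logDeriv g z) (closedBall c R) :=
    fun z hz => (hφ z hz).mul ((hg.deriv z hz).div (hg z hz) (hg₀ z hz))
  have hpole : ∀ w ∈ T, (∮ z in C(c, R), (z - w)⁻¹ * φ z) = 2 * π * I * φ w := fun w hw => by
    simpa only [smul_eq_mul] using hφ.diffContOnCl_ball.circleIntegral_sub_inv_smul (hT w hw)
  rw [circleIntegral.integral_congr hR hsplit,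
    circleIntegral.integral_add (.fun_sum T hpole_integrable)
      (hregular.continuousOn.mono sphere_subset_closedBall |>.circleIntegrable hR),
    circleIntegral.integral_fun_sum hpole_integrable,
    hregular.diffContOnCl_ball.circleIntegral_eq_zero hR, add_zero, Finset.mul_sum]
  refine Finset.sum_congr rfl fun w hw => ?_
  rw [circleIntegral.integral_const_mul, hpole w hw]
  ring

theorem circleIntegral_mul_logDeriv_eq_sum {c : ℂ} {R : ℝ} (hR : 0 ≤ R) {f φ : ℂ → ℂ}
    (hf : AnalyticOnNhd ℂ f (closedBall c R)) (hφ : AnalyticOnNhd ℂ φ (closedBall c R))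
    {Z : Finset ℂ} (hZ_ball : ∀ w ∈ Z, w ∈ ball c R)
    (hZ : ∀ z ∈ closedBall c R, f z = 0 → z ∈ Z) (m : ℂ → ℕ)
    (hloc : ∀ w ∈ Z, ∃ h : ℂ → ℂ, AnalyticAt ℂ h w ∧ h w ≠ 0 ∧
      ∀ᶠ z in 𝓝 w, f z = (z - w) ^ m w * h z) :
    (∮ z in C(c, R), φ z * logDeriv f z) = 2 * π * I * ∑ w ∈ Z, m w * φ w := by
  obtain ⟨g, hg, hgZ, hfg⟩ := hf.exists_eq_prod_pow_mul Z m hloc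
  have hg₀ : ∀ z ∈ closedBall c R, g z ≠ 0 := fun z hz hgz =>
    hgZ z (hZ z hz (by rw [hfg z, hgz, mul_zero])) hgz
  rw [funext hfg]
  exact circleIntegral_mul_logDeriv_prod_pow_mul hR hZ_ball m hg hg₀ hφ

theorem argument_principle_power_sums_general
    (r : ℝ) (hr : 0 < r)
    (s : Set ℂ) (hball : Metric.closedBall (0 : ℂ) r ⊆ s)
    (f : ℂ → ℂ) (hf : ∀ z ∈ s, AnalyticAt ℂ f z)
    (hne : ∀ z ∈ Metric.sphere (0 : ℂ) r, f z ≠ 0) :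
    ∃ Z : Finset ℂ, (↑Z = {w : ℂ | ‖w‖ < r ∧ f w = 0}) ∧
      ∃ m : ℂ → ℕ,
        (∀ w ∈ Z, ∃ g : ℂ → ℂ, AnalyticAt ℂ g w ∧ g w ≠ 0 ∧
          ∀ᶠ z in nhds w, f z = (z - w) ^ m w * g z) ∧
        ∀ k : ℕ,
          (2 * (Real.pi : ℂ) * Complex.I)⁻¹ * (∮ z in C(0, r), z ^ k * (deriv f z / f z)) =
            ∑ w ∈ Z, (m w : ℂ) * w ^ k := by
  have hfK : AnalyticOnNhd ℂ f (closedBall 0 r) := fun z hz => hf z (hball hz)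
  have hr_sphere : (r : ℂ) ∈ sphere (0 : ℂ) r := by simp [hr.le]
  have hKconn : IsPreconnected (closedBall (0 : ℂ) r) := (convex_closedBall _ _).isPreconnected
  have hfin : {w : ℂ | ‖w‖ < r ∧ f w = 0}.Finite :=
    (hfK.finite_setOf_eq_zero (isCompact_closedBall _ _) hKconn
      (sphere_subset_closedBall hr_sphere) (hne _ hr_sphere)).subset
      fun w hw => ⟨mem_closedBall_zero_iff.2 hw.1.le, hw.2⟩
  have hZ : ∀ w, w ∈ hfin.toFinset ↔ w ∈ ball (0 : ℂ) r ∧ f w = 0 := by simp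
  have hloc : ∀ w ∈ hfin.toFinset, ∃ g : ℂ → ℂ, AnalyticAt ℂ g w ∧ g w ≠ 0 ∧
      ∀ᶠ z in 𝓝 w, f z = (z - w) ^ analyticOrderNatAt f w * g z := fun w hw =>
    hfK.exists_eventually_eq_pow_analyticOrderNatAt_mul hKconn
      (sphere_subset_closedBall hr_sphere) (hne _ hr_sphere)
      (ball_subset_closedBall ((hZ w).1 hw).1)
  refine ⟨hfin.toFinset, hfin.coe_toFinset, analyticOrderNatAt f, hloc, fun k => ?_⟩
  have hzeros : ∀ z ∈ closedBall (0 : ℂ) r, f z = 0 → z ∈ hfin.toFinset := fun z hz hfz =>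
    (hZ z).2 ⟨(mem_closedBall.1 hz).lt_of_ne fun h => hne z h hfz, hfz⟩
  simp only [← logDeriv_apply]
  rw [circleIntegral_mul_logDeriv_eq_sum hr.le hfK (φ := (· ^ k)) (fun z _ => by fun_prop)
    (fun w hw => ((hZ w).1 hw).1) hzeros _ hloc]
  exact inv_mul_cancel_left₀ two_pi_I_ne_zero _

/-- Argument principle with power weights: if `f` is analytic on an open set containing the
closed disc of radius `r` and nonvanishing on the circle `|z| = r`, then the zero set `Z` of
`f` in the open disc is finite and, for every `k ≥ 0`,
`(1/2πi)·∮_{|z|=r} z^k·(f′(z)/f(z)) dz = Σ_{w ∈ Z} m_w·w^k`,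
where `m_w` is the order of vanishing of `f` at `w` (witnessed by a local factorization
`f(z) = (z − w)^{m_w}·g(z)` with `g` analytic and `g(w) ≠ 0`). -/
theorem argument_principle_power_sums
    (r : ℝ) (hr : 0 < r)
    (s : Set ℂ) (hs : IsOpen s) (hball : Metric.closedBall (0 : ℂ) r ⊆ s)
    (f : ℂ → ℂ) (hf : ∀ z ∈ s, AnalyticAt ℂ f z)
    (hne : ∀ z ∈ Metric.sphere (0 : ℂ) r, f z ≠ 0) :
    ∃ Z : Finset ℂ, (↑Z = {w : ℂ | ‖w‖ < r ∧ f w = 0}) ∧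
      ∃ m : ℂ → ℕ,
        (∀ w ∈ Z, ∃ g : ℂ → ℂ, AnalyticAt ℂ g w ∧ g w ≠ 0 ∧
          ∀ᶠ z in nhds w, f z = (z - w) ^ m w * g z) ∧
        ∀ k : ℕ,
          (2 * (Real.pi : ℂ) * Complex.I)⁻¹ * (∮ z in C(0, r), z ^ k * (deriv f z / f z)) =
            ∑ w ∈ Z, (m w : ℂ) * w ^ k :=
  argument_principle_power_sums_general r hr s hball f hf hne
end
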